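/- arXiv:math/0212041 — 12 statements merged into one kernel-verified Lean document; each statement's English description precedes it below -/
import Mathlib

section
/- If X ⊆ 2^ω is a set such that the image c_n''[X]^2 omits some value m ∈ n (i.e., no two distinct elements of X first differ at a coordinate congruent to m mod n), then the topological closure of X has the same property: no two distinct elements of the closure of X first differ at a coordinate congruent to m mod n. -/
/-- The least coordinate where two elements of Cantor space differ. -/
noncomputable def Δ (x y : ℕ → Bool) : ℕ := sInf {m | x m ≠ y m}

/-- `X` omits the color `m` under `c_n`: no two distinct elements of `X` first
differ at a coordinate congruent to `m` mod `n`. -/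
def omitsColor (n m : ℕ) (X : Set (ℕ → Bool)) : Prop :=
  ∀ x ∈ X, ∀ y ∈ X, x ≠ y → Δ x y % n ≠ m

lemma cyl_open (x : ℕ → Bool) (k : ℕ) :
    IsOpen {z : ℕ → Bool | ∀ i ≤ k, z i = x i} := by
  have : {z : ℕ → Bool | ∀ i ≤ k, z i = x i}
      = ⋂ i ∈ Finset.range (k+1), {z : ℕ → Bool | z i = x i} := by
    ext z
    simp [Nat.lt_succ_iff]
  rw [this]
  refine isOpen_biInter_finset fun i _ => ?_
  have : {z : ℕ → Bool | z i = x i} = (fun z : ℕ → Bool => z i) ⁻¹' {x i} := by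
    ext z; simp
  rw [this]
  exact (continuous_apply i).isOpen_preimage _ (isOpen_discrete _)

lemma delta_spec {x y : ℕ → Bool} (hxy : x ≠ y) :
    x (Δ x y) ≠ y (Δ x y) ∧ ∀ i < Δ x y, x i = y i := by
  have hne : {m | x m ≠ y m}.Nonempty := by
    by_contra hc
    exact hxy (funext fun i => by
      by_contra hi
      exact hc ⟨i, hi⟩)
  constructor
  · exact Nat.sInf_mem hne
  · intro i hi
    by_contra hne'
    exact absurd (Nat.sInf_le hne') (not_le.mpr hi)

/-- If `X` omits the color `m` under `c_n`, so does its topological closure. -/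
theorem stmt2 (n m : ℕ) (hn : 0 < n) (hm : m < n) (X : Set (ℕ → Bool))
    (h : omitsColor n m X) : omitsColor n m (closure X) := by
  intro x hx y hy hxy hmod
  set k := Δ x y with hk
  obtain ⟨hk1, hk2⟩ := delta_spec hxy
  obtain ⟨x', hx', hx'X⟩ := mem_closure_iff.mp hx _ (cyl_open x k)
    (fun i _ => rfl)
  obtain ⟨y', hy', hy'X⟩ := mem_closure_iff.mp hy _ (cyl_open y k)
    (fun i _ => rfl)
  have hx'y' : x' ≠ y' := fun e => hk1 (by
    rw [← hx' k le_rfl, ← hy' k le_rfl, e])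
  have hΔ : Δ x' y' = k := by
    have h1 : x' k ≠ y' k := by
      rw [hx' k le_rfl, hy' k le_rfl]; exact hk1
    have h2 : ∀ i < k, x' i = y' i := fun i hi => by
      rw [hx' i hi.le, hy' i hi.le]; exact hk2 i hi
    have hle : Δ x' y' ≤ k := Nat.sInf_le h1
    rcases lt_or_eq_of_le hle with hlt | heq
    · exact absurd (h2 _ hlt) (delta_spec hx'y').1
    · exact heq
  exact h x' hx'X y' hy'X hx'y' (by rw [hΔ]; exact hmod)
end

section
/- Suppose n > 0 and X ⊆ 2^ω is a closed set such that some m ∈ n is omitted by c_n on pairs from X (no two distinct elements of X first differ at a coordinate ≡ m mod n). Then X is nowhere dense in 2^ω. -/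
/-- A closed set omitting a `c_n`-color is nowhere dense in Cantor space. -/
theorem stmt3 (n m : ℕ) (hn : 0 < n) (hm : m < n) (X : Set (ℕ → Bool))
    (hX : IsClosed X) (h : omitsColor n m X) : IsNowhereDense X := by
  unfold IsNowhereDense
  rw [hX.closure_eq]
  rw [Set.eq_empty_iff_forall_notMem]
  intro x hx
  have hmem : interior X ∈ nhds x := isOpen_interior.mem_nhds hx
  rw [nhds_pi, Filter.mem_pi] at hmem
  obtain ⟨I, hI, t, ht, hsub⟩ := hmem
  -- pick j beyond I with j % n = m
  set K := hI.toFinset.sup id + 1 with hK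
  set j := n * K + m with hj
  have hjI : j ∉ I := by
    intro hji
    have : j ≤ hI.toFinset.sup id := Finset.le_sup (f := id) (hI.mem_toFinset.mpr hji)
    have hKj : K ≤ j := le_trans (Nat.le_mul_of_pos_left K hn) (Nat.le_add_right _ _)
    omega
  set y := Function.update x j (!x j) with hy
  have hxy : ∀ i, x i ≠ y i ↔ i = j := by
    intro i
    by_cases hij : i = j
    · subst hij
      simp [hy, Function.update_self]
    · simp [hy, Function.update_of_ne hij, hij]
  have hyI : y ∈ Set.pi I t := by
    intro i hi
    have : y i = x i := by
      rw [hy, Function.update_of_ne]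
      intro hij; exact hjI (hij ▸ hi)
    rw [this]
    have := ht i
    simpa using this
  have hyX : y ∈ X := interior_subset (hsub hyI)
  have hxX : x ∈ X := interior_subset hx
  have hne : x ≠ y := by
    intro he
    have := (hxy j).mpr rfl
    rw [he] at this
    exact this rfl
  have hΔ : Δ x y = j := by
    unfold Δ
    have : {k | x k ≠ y k} = {j} := by
      ext k; simp [hxy k]
    rw [this]
    simp [csInf_singleton]
  have := h x hxX y hyX hne
  rw [hΔ, hj] at this
  exact this (by simp [Nat.mul_add_mod, Nat.mod_eq_of_lt hm])
end

section
/- For every n > 0, every set X ⊆ 2^ω such that c_n''[X]^2 ≠ n is meager in 2^ω; consequently the σ-ideal J_n generated by such sets is contained in the meager ideal, and 2^ω ∉ J_n. -/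
/-- Membership in the σ-ideal `J_n`, σ-generated by the sets omitting a color. -/
def memJ (n : ℕ) (A : Set (ℕ → Bool)) : Prop :=
  ∃ X : ℕ → Set (ℕ → Bool), (∀ i, ∃ m < n, omitsColor n m (X i)) ∧ A ⊆ ⋃ i, X i

lemma omits_nowhereDense (n m : ℕ) (hn : 0 < n) (hm : m < n) (X : Set (ℕ → Bool))
    (hX : omitsColor n m X) : IsNowhereDense X := by
  rw [IsNowhereDense, Set.eq_empty_iff_forall_notMem]
  intro x hx
  -- get a cylinder around x inside closure X
  obtain ⟨s, ⟨y, k, rfl⟩, hxs, hsub⟩ :=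
    (PiNat.isTopologicalBasis_cylinders (fun _ : ℕ => Bool)).exists_subset_of_mem_open hx
      isOpen_interior
  -- choose a level ℓ ≥ k with ℓ % n = m
  set ℓ : ℕ := m + n * (k + 1) with hℓ
  have hkℓ : k ≤ ℓ := by
    have : k + 1 ≤ n * (k + 1) := Nat.le_mul_of_pos_left _ hn
    omega
  have hℓm : ℓ % n = m := by
    rw [hℓ, Nat.add_mul_mod_self_left, Nat.mod_eq_of_lt hm]
  classical
  set b : Bool := if ∃ z ∈ X, (∀ i < ℓ, z i = y i) ∧ z ℓ = true then false else true with hb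
  -- the witness point
  set w : ℕ → Bool := fun i => if i < ℓ then y i else b with hw
  have hwℓ : w ℓ = b := by simp [hw]
  have hwy : ∀ i < ℓ, w i = y i := fun i hi => by simp [hw, hi]
  -- the cylinder around w of length ℓ+1 is disjoint from X
  have hdisj : ∀ z ∈ X, z ∉ PiNat.cylinder w (ℓ + 1) := by
    intro z hz hmem
    have hzy : ∀ i < ℓ, z i = y i := fun i hi => by
      rw [hmem i (by omega), hwy i hi]
    have hzℓ : z ℓ = b := by rw [hmem ℓ (by omega), hwℓ]
    by_cases hcase : ∃ z' ∈ X, (∀ i < ℓ, z' i = y i) ∧ z' ℓ = true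
    · obtain ⟨z', hz', hz'y, hz'ℓ⟩ := hcase
      have hbf : b = false := by simp [hb]; exact ⟨z', hz', hz'y, hz'ℓ⟩
      have hne : z ≠ z' := fun h => by
        rw [h] at hzℓ; rw [hz'ℓ] at hzℓ; simp [hbf] at hzℓ
      have hΔ : Δ z z' = ℓ := by
        have hℓmem : ℓ ∈ {i | z i ≠ z' i} := by
          simp only [Set.mem_setOf_eq, hzℓ, hz'ℓ, hbf]; simp
        refine le_antisymm (Nat.sInf_le hℓmem) (le_csInf ⟨ℓ, hℓmem⟩ ?_)
        intro i hi
        by_contra h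
        push_neg at h
        exact hi ((hzy i h).trans (hz'y i h).symm)
      exact hX z hz z' hz' hne (by rw [hΔ, hℓm])
    · have hbt : b = true := by simp [hb, hcase]
      exact hcase ⟨z, hz, hzy, by rw [hzℓ, hbt]⟩
  -- but w is in the cylinder around y of length k, so in closure X
  have hwmem : w ∈ PiNat.cylinder y k := fun i hi => hwy i (by omega)
  have hwcl : w ∈ closure X := interior_subset (hsub hwmem)
  -- cylinder w (ℓ+1) is an open neighborhood of w disjoint from X
  have := mem_closure_iff.1 hwcl (PiNat.cylinder w (ℓ + 1))
    (PiNat.isOpen_cylinder _ w (ℓ + 1)) (PiNat.self_mem_cylinder w (ℓ + 1))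
  obtain ⟨z, hz1, hz2⟩ := this
  exact hdisj z hz2 hz1

/-- Every set omitting a `c_n`-color is meager; hence `J_n` is contained in the
meager ideal and `J_n` is nontrivial. -/
theorem stmt4 (n : ℕ) (hn : 0 < n) :
    (∀ X : Set (ℕ → Bool), (∃ m < n, omitsColor n m X) → IsMeagre X) ∧
    (∀ A : Set (ℕ → Bool), memJ n A → IsMeagre A) ∧
    ¬ memJ n (Set.univ : Set (ℕ → Bool)) := by
  have h1 : ∀ X : Set (ℕ → Bool), (∃ m < n, omitsColor n m X) → IsMeagre X := by
    rintro X ⟨m, hm, hX⟩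
    have hnwd := omits_nowhereDense n m hn hm X hX
    rw [isMeagre_iff_countable_union_isNowhereDense]
    exact ⟨{X}, by simpa using hnwd, Set.countable_singleton X, by simp⟩
  have h2 : ∀ A : Set (ℕ → Bool), memJ n A → IsMeagre A := by
    rintro A ⟨X, hX, hA⟩
    exact (isMeagre_iUnion fun i => h1 (X i) (hX i)).mono hA
  refine ⟨h1, h2, fun hmem => ?_⟩
  have huniv : IsMeagre (Set.univ : Set (ℕ → Bool)) := h2 _ hmem
  rw [IsMeagre, Set.compl_univ] at huniv
  have hd : Dense (∅ : Set (ℕ → Bool)) := dense_of_mem_residual huniv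
  simpa using hd.nonempty
end

section
/- For every n > 0, the σ-ideal J_n is σ-generated by closed sets: every set in J_n is contained in a countable union of closed sets each of which omits some color under c_n. -/
lemma delta_mem {x y : ℕ → Bool} (hxy : x ≠ y) : x (Δ x y) ≠ y (Δ x y) := by
  have : {m | x m ≠ y m}.Nonempty := by
    by_contra hne
    exact hxy (funext fun m => by
      by_contra h'
      exact hne ⟨m, h'⟩)
  exact Nat.sInf_mem this

lemma delta_lt {x y : ℕ → Bool} {k : ℕ} (hk : k < Δ x y) : x k = y k := by
  by_contra h'
  exact absurd (Nat.sInf_le h') (Nat.not_le.mpr hk)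

lemma delta_eq {x y x' y' : ℕ → Bool} (hxy : x ≠ y)
    (hx : ∀ k ≤ Δ x y, x' k = x k) (hy : ∀ k ≤ Δ x y, y' k = y k) :
    Δ x' y' = Δ x y := by
  have hmem : x' (Δ x y) ≠ y' (Δ x y) := by
    rw [hx _ le_rfl, hy _ le_rfl]; exact delta_mem hxy
  have h1 : Δ x' y' ≤ Δ x y := Nat.sInf_le hmem
  have h2 : Δ x y ≤ Δ x' y' := by
    by_contra h'
    push_neg at h'
    have := delta_mem (x := x') (y := y') (by
      intro he; exact hmem (by rw [he]))
    rw [hx _ (le_of_lt h'), hy _ (le_of_lt h')] at this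
    exact this (delta_lt h')
  exact le_antisymm h1 h2

lemma omits_closure {n m : ℕ} {X : Set (ℕ → Bool)} (h : omitsColor n m X) :
    omitsColor n m (closure X) := by
  intro x hx y hy hxy hmod
  set d := Δ x y with hd
  -- open neighborhoods fixing first d+1 coordinates
  have key : ∀ z : ℕ → Bool, z ∈ closure X →
      ∃ z' ∈ X, ∀ k ≤ d, z' k = z k := by
    intro z hz
    have hopen : IsOpen ((↑(Finset.range (d+1)) : Set ℕ).pi fun k => ({z k} : Set Bool)) :=
      isOpen_set_pi (Finset.finite_toSet _) (fun i _ => isOpen_discrete _)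
    have hzmem : z ∈ (↑(Finset.range (d+1)) : Set ℕ).pi fun k => ({z k} : Set Bool) := by
      intro i _; rfl
    obtain ⟨z', hz'1, hz'2⟩ := mem_closure_iff.mp hz _ hopen hzmem
    exact ⟨z', hz'2, fun k hk => hz'1 k (by
      simp [Finset.mem_range, Nat.lt_succ_iff, hk])⟩
  obtain ⟨x', hx'X, hx'⟩ := key x hx
  obtain ⟨y', hy'X, hy'⟩ := key y hy
  have hne : x' ≠ y' := by
    intro he
    apply delta_mem hxy
    rw [← hx' _ le_rfl, ← hy' _ le_rfl, he]
  have : Δ x' y' = d := delta_eq hxy hx' hy'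
  exact h x' hx'X y' hy'X hne (by rw [this]; exact hmod)

/-- `J_n` is σ-generated by closed sets: every member of `J_n` is contained in
a countable union of closed sets, each omitting a `c_n`-color. -/
theorem stmt5 (n : ℕ) (hn : 0 < n) (A : Set (ℕ → Bool)) (h : memJ n A) :
    ∃ F : ℕ → Set (ℕ → Bool),
      (∀ i, IsClosed (F i) ∧ ∃ m < n, omitsColor n m (F i)) ∧ A ⊆ ⋃ i, F i := by
  obtain ⟨X, hX, hA⟩ := h
  refine ⟨fun i => closure (X i), fun i => ⟨isClosed_closure, ?_⟩, ?_⟩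
  · obtain ⟨m, hm, hom⟩ := hX i
    exact ⟨m, hm, omits_closure hom⟩
  · exact hA.trans (Set.iUnion_mono fun i => subset_closure)
end

section
/- Let T ⊆ 2^{<ω} be an n-fat tree, i.e., a nonempty tree such that for every node s ∈ T and every m ∈ n there is a splitting node t ∈ T extending s whose length is congruent to m mod n. Then the set [T] of infinite branches of T is not in the ideal J_n. -/
/-- A tree of finite binary sequences: closed under initial segments. -/
def IsTree (T : Set (List Bool)) : Prop := ∀ s ∈ T, ∀ t : List Bool, t <+: s → t ∈ T

/-- `t` is a splitting node of `T`. -/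
def Splits (T : Set (List Bool)) (t : List Bool) : Prop :=
  t ∈ T ∧ t ++ [false] ∈ T ∧ t ++ [true] ∈ T

/-- An `n`-fat tree. -/
def nFat (n : ℕ) (T : Set (List Bool)) : Prop :=
  IsTree T ∧ T.Nonempty ∧
    ∀ s ∈ T, ∀ m < n, ∃ t : List Bool, s <+: t ∧ Splits T t ∧ t.length % n = m

/-- The set of infinite branches of a tree. -/
def branches (T : Set (List Bool)) : Set (ℕ → Bool) :=
  {x | ∀ k : ℕ, (List.ofFn fun i : Fin k => x i) ∈ T}

/-!
Suppose `[T] ⊆ ⋃ i, X i` with `X i` omitting the colour `m i`. Two branches through different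
children of a splitting node `t` first differ at `|t|`, so if `|t| ≡ m i` then one child of `t`
has no extension in `X i`. Fatness supplies such a splitting node above every node, so a fusion
sequence `s₀ ⊑ s₁ ⊑ ⋯` in `T` with `s_{i+1}` avoiding `X i` converges to a branch of `T` outside
every `X i`.
-/

def Agrees (t : List Bool) (x : ℕ → Bool) : Prop :=
  ∀ k (h : k < t.length), x k = t[k]

lemma Agrees.of_prefix {s t : List Bool} {x : ℕ → Bool} (hst : s <+: t) (h : Agrees t x) :
    Agrees s x := fun k hk => (h k _).trans (hst.getElem hk).symm

lemma Agrees.apply_length_of_append {t : List Bool} {b : Bool} {x : ℕ → Bool}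
    (h : Agrees (t ++ [b]) x) : x t.length = b :=
  (h _ (by simp)).trans (List.getElem_concat_length rfl _)

lemma Δ_eq_of_eqOn_of_ne {x y : ℕ → Bool} {L : ℕ} (heq : ∀ k < L, x k = y k) (hne : x L ≠ y L) :
    Δ x y = L :=
  le_antisymm (Nat.sInf_le hne) (le_csInf ⟨L, hne⟩ fun _ hk => not_lt.mp fun h => hk (heq _ h))

lemma Agrees.Δ_eq {t : List Bool} {x y : ℕ → Bool} (hx : Agrees t x) (hy : Agrees t y)
    (hne : x t.length ≠ y t.length) : Δ x y = t.length :=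
  Δ_eq_of_eqOn_of_ne (fun k hk => (hx k hk).trans (hy k hk).symm) hne

lemma exists_child_forall_not_agrees {n : ℕ} {X : Set (ℕ → Bool)} {t : List Bool}
    (homit : omitsColor n (t.length % n) X) : ∃ b, ∀ x ∈ X, ¬ Agrees (t ++ [b]) x := by
  by_contra! h
  obtain ⟨x, hxX, hx⟩ := h false
  obtain ⟨y, hyX, hy⟩ := h true
  have hne : x t.length ≠ y t.length := by
    rw [hx.apply_length_of_append, hy.apply_length_of_append]; decide
  refine homit x hxX y hyX (fun e => hne (by rw [e])) ?_
  rw [(hx.of_prefix (List.prefix_append _ _)).Δ_eq (hy.of_prefix (List.prefix_append _ _)) hne]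

lemma nFat.exists_extension_forall_not_mem {n m : ℕ} {T : Set (List Bool)} (hT : nFat n T)
    {X : Set (ℕ → Bool)} (hm : m < n) (homit : omitsColor n m X) {s : List Bool} (hs : s ∈ T) :
    ∃ t ∈ T, s <+: t ∧ s.length < t.length ∧ ∀ x, Agrees t x → x ∉ X := by
  obtain ⟨t, hst, ⟨-, ht0, ht1⟩, rfl⟩ := hT.2.2 s hs m hm
  obtain ⟨b, hb⟩ := exists_child_forall_not_agrees homit
  refine ⟨t ++ [b], by cases b <;> assumption, hst.trans (List.prefix_append _ _), ?_,
    fun x hx hxX => hb x hxX hx⟩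
  simpa using Nat.lt_succ_of_le hst.length_le

lemma exists_agrees_of_prefix_chain {s : ℕ → List Bool} (hpre : ∀ i, s i <+: s (i + 1))
    (hlen : ∀ i, (s i).length < (s (i + 1)).length) : ∃ x : ℕ → Bool, ∀ i, Agrees (s i) x := by
  have hmono : ∀ ⦃i j⦄, i ≤ j → s i <+: s j := Nat.rel_of_forall_rel_succ_of_le _ hpre
  have hlong : ∀ i, i < (s (i + 1)).length := fun i => by
    induction i with
    | zero => exact Nat.zero_lt_of_lt (hlen 0)
    | succ i ih => exact Nat.lt_of_le_of_lt ih (hlen (i + 1))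
  refine ⟨fun k => (s (k + 1))[k]'(hlong k), fun i k hk => ?_⟩
  rcases le_total i (k + 1) with h | h
  · exact ((hmono h).getElem hk).symm
  · exact (hmono h).getElem (hlong k)

lemma mem_branches_of_agrees {T : Set (List Bool)} (hT : IsTree T) {x : ℕ → Bool}
    (h : ∀ k, ∃ t ∈ T, k ≤ t.length ∧ Agrees t x) : x ∈ branches T := by
  intro k
  obtain ⟨t, htT, hk, hx⟩ := h k
  have htake : (List.ofFn fun i : Fin k => x i) = t.take k :=
    List.ext_getElem (by simp [hk]) fun j hj _ => by
      simpa using hx j (by simp at hj; omega)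
  exact htake ▸ hT t htT _ (List.take_prefix _ _)

lemma exists_mem_branches_not_mem_iUnion {T : Set (List Bool)} (hT : IsTree T) {s₀ : List Bool}
    (hs₀ : s₀ ∈ T) {X : ℕ → Set (ℕ → Bool)}
    (hext : ∀ s ∈ T, ∀ i, ∃ t ∈ T, s <+: t ∧ s.length < t.length ∧ ∀ x, Agrees t x → x ∉ X i) :
    ∃ x ∈ branches T, x ∉ ⋃ i, X i := by
  choose! F hFT hFpre hFlen hFavoid using hext
  let s : ℕ → List Bool := fun i => Nat.rec s₀ (fun i t => F t i) i
  have hsT : ∀ i, s i ∈ T := fun i => by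
    induction i with
    | zero => exact hs₀
    | succ i ih => exact hFT _ ih i
  obtain ⟨x, hx⟩ := exists_agrees_of_prefix_chain (fun i => hFpre _ (hsT i) i)
    (fun i => hFlen _ (hsT i) i)
  have hlen : ∀ i, i ≤ (s i).length := fun i => by
    induction i with
    | zero => exact Nat.zero_le _
    | succ i ih => exact ih.trans_lt (hFlen _ (hsT i) i)
  refine ⟨x, mem_branches_of_agrees hT fun k => ⟨s k, hsT k, hlen k, hx k⟩, ?_⟩
  rintro ⟨-, ⟨i, rfl⟩, hxi⟩
  exact hFavoid _ (hsT i) i x (hx (i + 1)) hxi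

theorem stmt6_general (n : ℕ) (T : Set (List Bool)) (hT : nFat n T) :
    ¬ memJ n (branches T) := by
  rintro ⟨X, hX, hsub⟩
  choose m hmn homit using hX
  obtain ⟨s₀, hs₀⟩ := hT.2.1
  obtain ⟨x, hxT, hxX⟩ := exists_mem_branches_not_mem_iUnion hT.1 hs₀
    fun s hs i => hT.exists_extension_forall_not_mem (hmn i) (homit i) hs
  exact hxX (hsub hxT)

/-- The branch set of an `n`-fat tree is `J_n`-positive. -/
theorem stmt6 (n : ℕ) (hn : 0 < n) (T : Set (List Bool)) (hT : nFat n T) :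
    ¬ memJ n (branches T) :=
  stmt6_general n T hT
end

section
/- Let n > 0, k ∈ n, and let X ⊆ 2^ω be a set such that no two distinct elements of X first differ at a coordinate ≡ k (mod n). Then the preimage g_n^{-1}(X) ⊆ (2^ω)^n is the graph of a partial function in the k-th coordinate: if x⃗, y⃗ ∈ g_n^{-1}(X) agree on all coordinates except possibly k, then x⃗ = y⃗. -/
/-- The canonical bijection `(2^ω)^n → 2^ω`, `g_n(x⃗)(m) = x⃗(m mod n)(⌊m/n⌋)`. -/
def gmap (n : ℕ) (hn : 0 < n) (x : Fin n → ℕ → Bool) (m : ℕ) : Bool :=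
  x ⟨m % n, Nat.mod_lt m hn⟩ (m / n)

/-- If `X` omits the color `k` under `c_n`, then `g_n⁻¹(X)` is the graph of a
partial function in the `k`-th coordinate. -/
theorem stmt11 (n k : ℕ) (hn : 0 < n) (hk : k < n) (X : Set (ℕ → Bool))
    (h : omitsColor n k X) :
    ∀ x y : Fin n → ℕ → Bool, gmap n hn x ∈ X → gmap n hn y ∈ X →
      (∀ j : Fin n, j ≠ ⟨k, hk⟩ → x j = y j) → x = y := by
  intro x y hx hy hagree
  by_contra hxy
  -- x and y differ, so gmap x ≠ gmap y
  have hne : gmap n hn x ≠ gmap n hn y := by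
    intro hg
    apply hxy
    funext j t
    have : gmap n hn x (t * n + j) = gmap n hn y (t * n + j) := by rw [hg]
    have hj : (t * n + (j : ℕ)) % n = j := by
      rw [Nat.add_comm, Nat.add_mul_mod_self_right, Nat.mod_eq_of_lt j.isLt]
    have hd : (t * n + (j : ℕ)) / n = t := by
      rw [Nat.add_comm, Nat.add_mul_div_right _ _ hn, Nat.div_eq_of_lt j.isLt, Nat.zero_add]
    simpa [gmap, hj, hd, Fin.ext_iff] using this
  have key : ∀ m, gmap n hn x m ≠ gmap n hn y m → m % n = k := by
    intro m hm
    by_contra hmk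
    apply hm
    have := hagree ⟨m % n, Nat.mod_lt m hn⟩ (by simpa [Fin.ext_iff] using hmk)
    simp [gmap, this]
  have hmem : Δ (gmap n hn x) (gmap n hn y) ∈ {m | gmap n hn x m ≠ gmap n hn y m} := by
    apply Nat.sInf_mem
    rcases Function.ne_iff.mp hne with ⟨m, hm⟩
    exact ⟨m, hm⟩
  exact h _ hx _ hy hne (key _ hmem)
end

section
/- Let K_n be the σ-ideal on (2^ω)^n generated by graphs of partial Borel functions from (2^ω)^{n∖{k}} to 2^ω for k ∈ n, and let J_n be the σ-ideal on 2^ω generated by sets omitting a c_n-color. Then the g_n-preimage of every set in J_n lies in K_n, and consequently non(J_n) ≤ non(K_n). -/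
/-- `G` is the graph of a partial Borel function `(2^ω)^{n∖{k}} → 2^ω` for some `k < n`. -/
def isBorelGraph (n : ℕ) (G : Set (Fin n → ℕ → Bool)) : Prop :=
  ∃ k : Fin n, ∃ f : (Fin n → ℕ → Bool) → ℕ → Bool, ∃ D : Set (Fin n → ℕ → Bool),
    Measurable f ∧ MeasurableSet D ∧
    (∀ x y : Fin n → ℕ → Bool, (∀ j, j ≠ k → x j = y j) → f x = f y) ∧
    G = {x | x ∈ D ∧ x k = f x}

/-- Membership in the σ-ideal `K_n` σ-generated by such graphs. -/
def memK (n : ℕ) (A : Set (Fin n → ℕ → Bool)) : Prop :=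
  ∃ G : ℕ → Set (Fin n → ℕ → Bool), (∀ i, isBorelGraph n (G i)) ∧ A ⊆ ⋃ i, G i

/-- The uniformity of `J_n`: least cardinality of a `J_n`-positive set. -/
noncomputable def nonJ (n : ℕ) : Cardinal :=
  sInf {κ | ∃ S : Set (ℕ → Bool), ¬ memJ n S ∧ Cardinal.mk S = κ}

/-- The uniformity of `K_n`: least cardinality of a `K_n`-positive set. -/
noncomputable def nonK (n : ℕ) : Cardinal :=
  sInf {κ | ∃ S : Set (Fin n → ℕ → Bool), ¬ memK n S ∧ Cardinal.mk S = κ}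

open MeasureTheory

attribute [local instance] Classical.propDecidable

noncomputable section Aux

/-- Choice of a bit extending a prefix within `X`. -/
def pick (X : Set (ℕ → Bool)) (p : ℕ) (s : ℕ → Bool) : Bool :=
  if h : ∃ y, y ∈ X ∧ ∀ q < p, y q = s q then h.choose p else false

variable (n : ℕ) (hn : 0 < n) (m : ℕ) (X : Set (ℕ → Bool))

def bitf (x : Fin n → ℕ → Bool) (p : ℕ) (s : ℕ → Bool) : Bool :=
  if p % n = m then pick X p s else x ⟨p % n, Nat.mod_lt p hn⟩ (p / n)

def wpre (x : Fin n → ℕ → Bool) : ℕ → ℕ → Bool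
  | 0 => fun _ => false
  | p+1 => fun q => if q = p then bitf n hn m X x p (wpre x p)
      else if q < p then wpre x p q else false

def wfun (x : Fin n → ℕ → Bool) (p : ℕ) : Bool := bitf n hn m X x p (wpre n hn m X x p)

variable {n hn m X}

lemma wpre_ge (x : Fin n → ℕ → Bool) : ∀ p q, p ≤ q → wpre n hn m X x p q = false := by
  intro p
  induction p with
  | zero => intro q _; rfl
  | succ p ih =>
    intro q hq
    simp only [wpre]
    rw [if_neg (by omega), if_neg (by omega)]

lemma wpre_lt (x : Fin n → ℕ → Bool) : ∀ p q, q < p → wpre n hn m X x p q = wfun n hn m X x q := by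
  intro p
  induction p with
  | zero => omega
  | succ p ih =>
    intro q hq
    simp only [wpre]
    by_cases h : q = p
    · subst h; rw [if_pos rfl]; rfl
    · rw [if_neg h, if_pos (by omega), ih q (by omega)]

end Aux
section Aux2
attribute [local instance] Classical.propDecidable
variable {n : ℕ} {hn : 0 < n} {m : ℕ} {X : Set (ℕ → Bool)}

lemma wpre_eq_ite (x : Fin n → ℕ → Bool) (p : ℕ) :
    wpre n hn m X x p = fun q => if q < p then wfun n hn m X x q else false := by
  funext q
  by_cases h : q < p
  · rw [if_pos h, wpre_lt x p q h]
  · rw [if_neg h, wpre_ge x p q (by omega)]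

lemma wfun_invar (hm : m < n) (x y : Fin n → ℕ → Bool)
    (hxy : ∀ j, j ≠ (⟨m, hm⟩ : Fin n) → x j = y j) :
    ∀ p, wfun n hn m X x p = wfun n hn m X y p := by
  intro p
  induction p using Nat.strong_induction_on with
  | _ p ih =>
    have hpre : wpre n hn m X x p = wpre n hn m X y p := by
      rw [wpre_eq_ite, wpre_eq_ite]
      funext q
      by_cases h : q < p
      · rw [if_pos h, if_pos h, ih q h]
      · rw [if_neg h, if_neg h]
    show bitf n hn m X x p _ = bitf n hn m X y p _
    unfold bitf
    by_cases h : p % n = m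
    · rw [if_pos h, if_pos h, hpre]
    · rw [if_neg h, if_neg h, hxy _ (by simp only [ne_eq, Fin.mk.injEq]; exact h)]

lemma wfun_correct (hm : m < n) (hX : omitsColor n m X) (x : Fin n → ℕ → Bool)
    (hx : gmap n hn x ∈ X) : ∀ p, wfun n hn m X x p = gmap n hn x p := by
  intro p
  induction p using Nat.strong_induction_on with
  | _ p ih =>
    show bitf n hn m X x p _ = gmap n hn x p
    unfold bitf
    by_cases h : p % n = m
    · rw [if_pos h]
      have hpre : ∀ q < p, gmap n hn x q = wpre n hn m X x p q := by
        intro q hq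
        rw [wpre_lt x p q hq, ih q hq]
      have hex : ∃ y, y ∈ X ∧ ∀ q < p, y q = wpre n hn m X x p q :=
        ⟨gmap n hn x, hx, hpre⟩
      unfold pick
      rw [dif_pos hex]
      obtain ⟨hy1, hy2⟩ := hex.choose_spec
      set y := hex.choose with hy
      by_cases hcase : y = gmap n hn x
      · rw [hcase]
      · by_contra hne
        have hagree : ∀ q < p, y q = gmap n hn x q := by
          intro q hq
          rw [hy2 q hq, ← hpre q hq]
        have hΔ : Δ y (gmap n hn x) = p := by
          have hp : p ∈ {q | y q ≠ gmap n hn x q} := hne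
          have h1 : sInf {q | y q ≠ gmap n hn x q} ∈ {q | y q ≠ gmap n hn x q} :=
            Nat.sInf_mem ⟨p, hp⟩
          have h2 : ¬ sInf {q | y q ≠ gmap n hn x q} < p := fun hlt =>
            h1 (hagree _ hlt)
          exact le_antisymm (Nat.sInf_le hp) (not_lt.1 h2)
        exact hX y hy1 (gmap n hn x) hx hcase (by rw [hΔ, h])
    · rw [if_neg h]; rfl

end Aux2
section Meas
attribute [local instance] Classical.propDecidable
variable {n : ℕ} {hn : 0 < n} {m : ℕ} {X : Set (ℕ → Bool)}

/-- Composing a measurable map with finite "support" with an arbitrary function is measurable. -/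
lemma meas_comp_support {α : Type*} [MeasurableSpace α] (P : (ℕ → Bool) → Bool)
    (g : α → ℕ → Bool) (hg : Measurable g) (p : ℕ) (hsupp : ∀ a q, p ≤ q → g a q = false) :
    Measurable fun a => P (g a) := by
  have hT : Measurable fun a => fun i : Fin p => g a i.1 :=
    measurable_pi_lambda _ fun i => (measurable_pi_apply (i.1 : ℕ)).comp hg
  have key : (fun a => P (g a)) =
      (fun t : Fin p → Bool => P (fun q => if h : q < p then t ⟨q, h⟩ else false)) ∘
        (fun a => fun i : Fin p => g a i.1) := by
    funext a
    simp only [Function.comp_apply]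
    congr 1
    funext q
    by_cases h : q < p
    · rw [dif_pos h]
    · rw [dif_neg h, hsupp a q (by omega)]
  rw [key]
  exact (measurable_of_countable _).comp hT

lemma wpre_measurable (p : ℕ) : Measurable fun x : Fin n → ℕ → Bool => wpre n hn m X x p := by
  induction p with
  | zero => exact measurable_const
  | succ p ih =>
    apply measurable_pi_lambda
    intro q
    by_cases hq : q = p
    · simp only [wpre, if_pos hq]
      unfold bitf
      by_cases h : p % n = m
      · simp only [if_pos h]
        have hsupp : ∀ x q, p ≤ q → wpre n hn m X x p q = false := fun x q h => wpre_ge x p q h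
        exact meas_comp_support (pick X p) _ ih p hsupp
      · simp only [if_neg h]
        exact ((measurable_pi_apply (p / n)).comp (measurable_pi_apply _))
    · simp only [wpre, if_neg hq]
      by_cases h : q < p
      · simp only [if_pos h]
        exact (measurable_pi_apply q).comp ih
      · simp only [if_neg h]
        exact measurable_const

lemma wfun_measurable (p : ℕ) : Measurable fun x : Fin n → ℕ → Bool => wfun n hn m X x p := by
  show Measurable fun x => bitf n hn m X x p (wpre n hn m X x p)
  unfold bitf
  by_cases h : p % n = m
  · simp only [if_pos h]
    exact meas_comp_support (pick X p) _ (wpre_measurable p) p fun x q h => wpre_ge x p q h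
  · simp only [if_neg h]
    exact (measurable_pi_apply (p / n)).comp (measurable_pi_apply _)

end Meas
section Part1
attribute [local instance] Classical.propDecidable

lemma part1 (n : ℕ) (hn : 0 < n) (A : Set (ℕ → Bool)) (hA : memJ n A) :
    memK n (gmap n hn ⁻¹' A) := by
  obtain ⟨X, hX, hsub⟩ := hA
  choose m hm homit using hX
  set F : ℕ → (Fin n → ℕ → Bool) → ℕ → Bool :=
    fun i x => fun K => wfun n hn (m i) (X i) x (K * n + m i) with hF
  refine ⟨fun i => {x | x ∈ Set.univ ∧ x ⟨m i, hm i⟩ = F i x}, fun i => ?_, ?_⟩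
  · refine ⟨⟨m i, hm i⟩, F i, Set.univ, ?_, MeasurableSet.univ, ?_, rfl⟩
    · exact measurable_pi_lambda _ fun K => wfun_measurable _
    · intro x y hxy
      funext K
      exact wfun_invar (hm i) x y hxy _
  · intro x hx
    have : gmap n hn x ∈ ⋃ i, X i := hsub hx
    obtain ⟨i, hi⟩ := Set.mem_iUnion.1 this
    refine Set.mem_iUnion.2 ⟨i, Set.mem_univ x, ?_⟩
    funext K
    have h1 : F i x K = gmap n hn x (K * n + m i) :=
      wfun_correct (hm i) (homit i) x hi _
    have h2 : gmap n hn x (K * n + m i) = x ⟨m i, hm i⟩ K := by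
      have e1 : (K * n + m i) % n = m i := by
        rw [mul_comm, Nat.mul_add_mod]; exact Nat.mod_eq_of_lt (hm i)
      have e2 : (K * n + m i) / n = K := by
        rw [mul_comm, Nat.mul_add_div hn, Nat.div_eq_of_lt (hm i), Nat.add_zero]
      unfold gmap
      have e3 : (⟨(K * n + m i) % n, Nat.mod_lt _ hn⟩ : Fin n) = ⟨m i, hm i⟩ :=
        Fin.mk_eq_mk.mpr e1
      rw [e3, e2]
    rw [h1, h2]

end Part1
section MeasurePart
open MeasureTheory

/-- Binary digits of a real number. -/
noncomputable def digits (r : ℝ) : ℕ → Bool := fun K => decide (⌊r * 2 ^ (K + 1)⌋₊ % 2 = 1)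

lemma digits_measurable : Measurable digits := by
  apply measurable_pi_lambda
  intro K
  have h1 : Measurable fun r : ℝ => r * 2 ^ (K + 1) := measurable_id.mul_const _
  have h2 : Measurable fun r : ℝ => ⌊r * 2 ^ (K + 1)⌋₊ := Nat.measurable_floor.comp h1
  exact (measurable_from_top (f := fun n : ℕ => decide (n % 2 = 1))).comp h2

lemma floor_eq_of_digits_eq {r s : ℝ} (hr : r ∈ Set.Ico (0:ℝ) 1) (hs : s ∈ Set.Ico (0:ℝ) 1)
    (h : ∀ k, digits r k = digits s k) : ∀ K, ⌊r * 2 ^ K⌋₊ = ⌊s * 2 ^ K⌋₊ := by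
  intro K
  induction K with
  | zero =>
    simp only [pow_zero, mul_one]
    rw [Nat.floor_eq_zero.2 hr.2, Nat.floor_eq_zero.2 hs.2]
  | succ K ih =>
    have key : ∀ t : ℝ, ⌊t * 2 ^ K⌋₊ = ⌊t * 2 ^ (K + 1)⌋₊ / 2 := by
      intro t
      have : t * 2 ^ K = t * 2 ^ (K + 1) / (2 : ℕ) := by
        push_cast
        ring
      rw [this, Nat.floor_div_natCast]
    have hpar : ⌊r * 2 ^ (K + 1)⌋₊ % 2 = ⌊s * 2 ^ (K + 1)⌋₊ % 2 := by
      have := h K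
      simp only [digits, decide_eq_decide] at this
      omega
    have h1 := key r
    have h2 := key s
    omega

lemma digits_injOn : Set.InjOn digits (Set.Ico (0:ℝ) 1) := by
  intro r hr s hs h
  by_contra hne
  have habs : ∀ K : ℕ, |r - s| < (1/2 : ℝ) ^ K := by
    intro K
    have hf := floor_eq_of_digits_eq hr hs (fun k => congrFun h k) K
    have h2K : (0:ℝ) < 2 ^ K := by positivity
    have hrle : (⌊r * 2 ^ K⌋₊ : ℝ) ≤ r * 2 ^ K := Nat.floor_le (by nlinarith [hr.1])
    have hrlt : r * 2 ^ K < ⌊r * 2 ^ K⌋₊ + 1 := Nat.lt_floor_add_one _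
    have hsle : (⌊s * 2 ^ K⌋₊ : ℝ) ≤ s * 2 ^ K := Nat.floor_le (by nlinarith [hs.1])
    have hslt : s * 2 ^ K < ⌊s * 2 ^ K⌋₊ + 1 := Nat.lt_floor_add_one _
    rw [hf] at hrle hrlt
    rw [abs_sub_lt_iff]
    constructor <;> rw [div_pow, one_pow, lt_div_iff₀ h2K] <;> nlinarith
  obtain ⟨K, hK⟩ := exists_pow_lt_of_lt_one (x := |r - s|) (abs_pos.2 (sub_ne_zero.2 hne))
    (by norm_num : (1/2 : ℝ) < 1)
  exact absurd (habs K) (not_lt.2 (le_of_lt hK))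

/-- The coin-flipping measure on Cantor space. -/
noncomputable def μC : Measure (ℕ → Bool) :=
  (volume.restrict (Set.Ico (0:ℝ) 1)).map digits

instance : IsProbabilityMeasure μC := by
  constructor
  rw [μC, Measure.map_apply digits_measurable MeasurableSet.univ, Set.preimage_univ,
    Measure.restrict_apply MeasurableSet.univ, Set.univ_inter, Real.volume_Ico]
  norm_num

lemma μC_singleton (x : ℕ → Bool) : μC {x} = 0 := by
  rw [μC, Measure.map_apply digits_measurable (measurableSet_singleton x),
    Measure.restrict_apply (digits_measurable (measurableSet_singleton x))]
  apply Set.Subsingleton.measure_zero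
  intro r hr s hs
  exact digits_injOn hr.2 hs.2 (hr.1.trans hs.1.symm)

end MeasurePart
section Fubini
open MeasureTheory

/-- The product measure on `(2^ω)^n`. -/
noncomputable def μK (n : ℕ) : Measure (Fin n → ℕ → Bool) := Measure.pi fun _ => μC

instance (n : ℕ) : IsProbabilityMeasure (μK n) := by
  unfold μK; infer_instance

lemma graph_null {n : ℕ} (k : Fin n) (f : (Fin n → ℕ → Bool) → ℕ → Bool)
    (hf : Measurable f) (hinv : ∀ x y : Fin n → ℕ → Bool, (∀ j, j ≠ k → x j = y j) → f x = f y) :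
    μK n {x | x k = f x} = 0 := by
  classical
  set E : Set (Fin n → ℕ → Bool) := {x | x k = f x} with hE
  have hEmeas : MeasurableSet E := by
    have : E = ⋂ K, {x : Fin n → ℕ → Bool | x k K = f x K} := by
      ext x
      simp only [hE, Set.mem_setOf_eq, Set.mem_iInter, funext_iff]
    rw [this]
    apply MeasurableSet.iInter
    intro K
    have h1 : Measurable fun x : Fin n → ℕ → Bool => x k K :=
      (measurable_pi_apply K).comp (measurable_pi_apply k)
    have h2 : Measurable fun x : Fin n → ℕ → Bool => f x K :=
      (measurable_pi_apply K).comp hf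
    have : {x : Fin n → ℕ → Bool | x k K = f x K} =
        ((fun x => x k K) ⁻¹' {true} ∩ (fun x => f x K) ⁻¹' {true}) ∪
        ((fun x => x k K) ⁻¹' {false} ∩ (fun x => f x K) ⁻¹' {false}) := by
      ext x
      simp only [Set.mem_setOf_eq, Set.mem_union, Set.mem_inter_iff, Set.mem_preimage,
        Set.mem_singleton_iff]
      cases h : x k K <;> cases h' : f x K <;> simp
    rw [this]
    exact ((h1 (measurableSet_singleton _)).inter (h2 (measurableSet_singleton _))).union
      ((h1 (measurableSet_singleton _)).inter (h2 (measurableSet_singleton _)))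
  set p : Fin n → Prop := fun i => ¬ (i = k) with hp
  set e := MeasurableEquiv.piEquivPiSubtypeProd (fun _ : Fin n => ℕ → Bool) p with he
  have hmp := measurePreserving_piEquivPiSubtypeProd (fun _ : Fin n => μC) p
  have hs : MeasurableSet (⇑e.symm ⁻¹' E) := e.symm.measurable hEmeas
  have h0 : μK n E = ((Measure.pi fun _ : {i // p i} => μC).prod
      (Measure.pi fun _ : {i // ¬ p i} => μC)) (⇑e.symm ⁻¹' E) := by
    rw [← hmp.measure_preimage hs.nullMeasurableSet]
    show μK n E = μK n (⇑e ⁻¹' (⇑e.symm ⁻¹' E))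
    congr 1
    ext x
    simp
  rw [h0, Measure.prod_apply hs]
  have hzero : ∀ xo : {i // p i} → ℕ → Bool,
      (Measure.pi fun _ : {i // ¬ p i} => μC) (Prod.mk xo ⁻¹' (⇑e.symm ⁻¹' E)) = 0 := by
    intro xo
    have hk : ¬ p k := by simp [hp]
    set jk : {i // ¬ p i} := ⟨k, hk⟩ with hjk
    set c : ℕ → Bool := f (e.symm (xo, fun _ _ => false)) with hc
    have hsec : Prod.mk xo ⁻¹' (⇑e.symm ⁻¹' E) = {z : {i // ¬ p i} → ℕ → Bool | z jk = c} := by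
      ext z
      have hcoord : ∀ z : {i // ¬ p i} → ℕ → Bool, e.symm (xo, z) k = z jk := by
        intro z
        show (Equiv.piEquivPiSubtypeProd p (fun _ : Fin n => ℕ → Bool)).symm (xo, z) k = z jk
        rw [Equiv.piEquivPiSubtypeProd_symm_apply]
        rw [dif_neg hk]
      have hfz : f (e.symm (xo, z)) = c := by
        apply hinv
        intro j hj
        show (Equiv.piEquivPiSubtypeProd p (fun _ : Fin n => ℕ → Bool)).symm (xo, z) j =
          (Equiv.piEquivPiSubtypeProd p (fun _ : Fin n => ℕ → Bool)).symm (xo, fun _ _ => false) j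
        rw [Equiv.piEquivPiSubtypeProd_symm_apply, Equiv.piEquivPiSubtypeProd_symm_apply]
        rw [dif_pos hj, dif_pos hj]
      simp only [Set.mem_preimage, Set.mem_setOf_eq, hE]
      rw [hcoord z, hfz]
    rw [hsec]
    have hsing : {z : {i // ¬ p i} → ℕ → Bool | z jk = c} = {fun _ => c} := by
      ext z
      simp only [Set.mem_setOf_eq, Set.mem_singleton_iff]
      constructor
      · intro h
        funext j
        have hj : j = jk := Subtype.ext (not_not.1 j.2)
        rw [hj, h]
      · intro h
        rw [h]
    rw [hsing]
    have : ({fun _ => c} : Set ({i // ¬ p i} → ℕ → Bool)) =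
        Set.pi Set.univ (fun _ => {c}) := by
      ext z
      simp [funext_iff, Set.mem_pi]
    rw [this, Measure.pi_pi]
    exact Finset.prod_eq_zero (Finset.mem_univ jk) (μC_singleton c)
  calc ∫⁻ xo, (Measure.pi fun _ : {i // ¬ p i} => μC) (Prod.mk xo ⁻¹' (⇑e.symm ⁻¹' E))
        ∂(Measure.pi fun _ : {i // p i} => μC)
      = ∫⁻ _, 0 ∂(Measure.pi fun _ : {i // p i} => μC) := by
        congr 1
        funext xo
        exact hzero xo
    _ = 0 := lintegral_zero

end Fubini
section Final
open MeasureTheory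

lemma not_memK_univ (n : ℕ) : ¬ memK n Set.univ := by
  rintro ⟨G, hG, hsub⟩
  have hnull : ∀ i, μK n (G i) = 0 := by
    intro i
    obtain ⟨k, f, D, hf, hD, hinv, hGeq⟩ := hG i
    have h1 : G i ⊆ {x | x k = f x} := by
      rw [hGeq]; intro x hx; exact hx.2
    exact le_antisymm ((measure_mono h1).trans (graph_null k f hf hinv).le) zero_le
  have h2 : μK n Set.univ ≤ ∑' i, μK n (G i) :=
    (measure_mono hsub).trans (measure_iUnion_le G)
  rw [measure_univ] at h2
  simp only [hnull, tsum_zero] at h2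
  exact absurd h2 (by norm_num)


/-- The `g_n`-preimage of every set in `J_n` lies in `K_n`; consequently
`non(J_n) ≤ non(K_n)`. -/
theorem stmt12 (n : ℕ) (hn : 0 < n) :
    (∀ A : Set (ℕ → Bool), memJ n A → memK n (gmap n hn ⁻¹' A)) ∧
    nonJ n ≤ nonK n := by
  refine ⟨part1 n hn, ?_⟩
  have hne : {κ | ∃ S : Set (Fin n → ℕ → Bool), ¬ memK n S ∧ Cardinal.mk S = κ}.Nonempty :=
    ⟨Cardinal.mk (Set.univ : Set (Fin n → ℕ → Bool)), Set.univ, not_memK_univ n, rfl⟩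
  refine le_csInf hne ?_
  rintro κ ⟨S, hS, rfl⟩
  have hSJ : ¬ memJ n (gmap n hn '' S) := by
    intro hJ
    apply hS
    obtain ⟨G, hG, hsub⟩ := part1 n hn _ hJ
    exact ⟨G, hG, (Set.subset_preimage_image _ _).trans hsub⟩
  calc nonJ n ≤ Cardinal.mk (gmap n hn '' S) :=
        csInf_le (OrderBot.bddBelow _) ⟨gmap n hn '' S, hSJ, rfl⟩
    _ ≤ Cardinal.mk S := Cardinal.mk_image_le
end Final
end

section
/- In the game G_n(A) for A ⊆ 2^ω (where Adam plays an increasing chain of finite binary sequences s_0 ⊆ s_1 ⊆ … with |s_i| ≡ i mod n and Eve plays bits b_i with s_i⌢b_i ⊆ s_{i+1}, Adam winning if ∪_i s_i ∈ A): if Adam has a winning strategy, then A contains the branch set [T] of some n-fat tree, and conversely if [T] ⊆ A for an n-fat tree T, then Adam has a winning strategy. -/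
/-- The limit real of an increasing sequence of Adam moves (where `|s i| ≥ i`). -/
def limitOf (s : ℕ → List Bool) : ℕ → Bool := fun m => (s (m + 1)).getD m false

/-- Adam has a winning strategy in the game `G_n(A)`: he plays finite binary
sequences `s i` with `|s i| ≡ i (mod n)` forming an increasing chain with
`s i ⌢ b i ⊆ s (i+1)` where `b i` are Eve's bits; Adam wins if the union is in `A`. -/
def AdamWins (n : ℕ) (A : Set (ℕ → Bool)) : Prop :=
  ∃ σ : List Bool → List Bool, ∀ b : ℕ → Bool,
    (∀ i : ℕ, (σ (List.ofFn fun j : Fin i => b j)).length % n = i % n ∧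
      (σ (List.ofFn fun j : Fin i => b j)) ++ [b i] <+:
        σ (List.ofFn fun j : Fin (i + 1) => b j)) ∧
    limitOf (fun i => σ (List.ofFn fun j : Fin i => b j)) ∈ A

/-- Eve has a winning strategy in the game `G_n(A)`: her bit may depend on the
whole history `s 0, …, s i` of Adam's moves; she wins if for every legal run of
Adam against her strategy the resulting real is not in `A`. -/
def EveWins (n : ℕ) (A : Set (ℕ → Bool)) : Prop :=
  ∃ τ : List (List Bool) → Bool, ∀ s : ℕ → List Bool,
    (∀ i : ℕ, (s i).length % n = i % n ∧
      s i ++ [τ (List.ofFn fun j : Fin (i + 1) => s j)] <+: s (i + 1)) →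
    limitOf s ∉ A


namespace Stmt13Aux

/-- Two binary lists are comparable or diverge at a common prefix. -/
lemma trichotomy (p : List Bool) : ∀ q : List Bool, p <+: q ∨ q <+: p ∨
    ∃ r : List Bool, ∃ c : Bool, r ++ [c] <+: p ∧ r ++ [!c] <+: q := by
  induction p with
  | nil => intro q; exact Or.inl (List.nil_prefix)
  | cons a p ih =>
    intro q
    cases q with
    | nil => exact Or.inr (Or.inl List.nil_prefix)
    | cons b q =>
      by_cases hab : a = b
      · subst hab
        rcases ih q with h | h | ⟨r, c, h1, h2⟩
        · exact Or.inl (List.cons_prefix_cons.mpr ⟨rfl, h⟩)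
        · exact Or.inr (Or.inl (List.cons_prefix_cons.mpr ⟨rfl, h⟩))
        · exact Or.inr (Or.inr ⟨a :: r, c, List.cons_prefix_cons.mpr ⟨rfl, h1⟩,
            List.cons_prefix_cons.mpr ⟨rfl, h2⟩⟩)
      · have hb : b = !a := by cases a <;> cases b <;> simp_all
        refine Or.inr (Or.inr ⟨[], a, ?_, ?_⟩)
        · exact List.cons_prefix_cons.mpr ⟨rfl, List.nil_prefix⟩
        · exact List.cons_prefix_cons.mpr ⟨hb.symm, List.nil_prefix⟩

/-- Two prefixes of the same list with equal lengths are equal. -/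
lemma pp_eq {s t u : List Bool} (h1 : s <+: u) (h2 : t <+: u)
    (h : s.length = t.length) : s = t := by
  rcases List.prefix_or_prefix_of_prefix h1 h2 with h' | h'
  · exact h'.eq_of_length h
  · exact (h'.eq_of_length h.symm).symm

lemma getD_of_prefix {t u : List Bool} (h : t <+: u) {m : ℕ} (hm : m < t.length) :
    t.getD m false = u.getD m false := by
  rw [List.getD_eq_getElem _ _ hm,
    List.getD_eq_getElem _ _ (lt_of_lt_of_le hm h.length_le)]
  exact h.getElem hm

lemma prefix_of_getD {t u : List Bool} (hl : t.length ≤ u.length)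
    (h : ∀ m < t.length, t.getD m false = u.getD m false) : t <+: u := by
  rw [List.prefix_iff_eq_take]
  apply List.ext_getElem (by simp [List.length_take]; omega)
  intro i h1 h2
  rw [List.getElem_take]
  rw [← List.getD_eq_getElem t false h1,
    ← List.getD_eq_getElem u false (lt_of_lt_of_le h1 hl)]
  exact h i h1

/-- `t` agrees with `x` on its domain. -/
def agreesWith (x : ℕ → Bool) (t : List Bool) : Prop :=
  ∀ m < t.length, t.getD m false = x m

lemma agreesWith_ofFn (x : ℕ → Bool) (k : ℕ) :
    agreesWith x (List.ofFn fun i : Fin k => x i) := by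
  intro m hm
  rw [List.getD_eq_getElem _ _ hm, List.getElem_ofFn]

lemma agreesWith_prefix {x : ℕ → Bool} {t u : List Bool}
    (ht : agreesWith x t) (hu : agreesWith x u) (hl : t.length ≤ u.length) :
    t <+: u := by
  apply prefix_of_getD hl
  intro m hm
  rw [ht m hm, hu m (lt_of_lt_of_le hm hl)]

lemma agreesWith_append {x : ℕ → Bool} {t : List Bool} (h : agreesWith x t) :
    agreesWith x (t ++ [x t.length]) := by
  intro m hm
  simp only [List.length_append, List.length_singleton] at hm
  rcases Nat.lt_or_ge m t.length with h' | h'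
  · rw [List.getD_eq_getElem _ _ (by simp; omega), List.getElem_append_left h',
      ← List.getD_eq_getElem _ _ h']
    exact h m h'
  · have hm' : m = t.length := by omega
    subst hm'
    rw [List.getD_eq_getElem _ _ (by simp)]
    simp

lemma ofFn_getD_eq_take (q : List Bool) (k : ℕ) (hk : k ≤ q.length) :
    (List.ofFn fun j : Fin k => q.getD j false) = q.take k := by
  apply List.ext_getElem (by simp [List.length_take]; omega)
  intro i h1 h2
  simp only [List.length_ofFn] at h1
  rw [List.getElem_ofFn, List.getElem_take]
  exact List.getD_eq_getElem _ _ (by omega)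

lemma key_base (x : ℕ → Bool) (f : List Bool → List Bool)
    (H3 : ∀ q : List Bool, f [] <+: f q)
    (hx : ∀ k : ℕ, ∃ q : List Bool, (List.ofFn fun i : Fin k => x i) <+: f q) :
    agreesWith x (f []) := by
  obtain ⟨q, hq⟩ := hx (f []).length
  have heq : f [] = List.ofFn fun i : Fin (f []).length => x i :=
    pp_eq (H3 q) hq (by simp)
  rw [heq]
  exact agreesWith_ofFn x _

lemma key_step (x : ℕ → Bool) (f : List Bool → List Bool)
    (H2 : ∀ (p : List Bool) (c : Bool), f p ++ [c] <+: f (p ++ [c]))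
    (H3 : ∀ p r : List Bool, f p <+: f (p ++ r))
    (hx : ∀ k : ℕ, ∃ q : List Bool, (List.ofFn fun i : Fin k => x i) <+: f q)
    (p : List Bool) (hp : agreesWith x (f p)) :
    agreesWith x (f (p ++ [x (f p).length])) := by
  set c := x (f p).length with hc
  have hfc : agreesWith x (f p ++ [c]) := agreesWith_append hp
  set M := (f (p ++ [c])).length with hM
  have hLM : (f p).length + 1 ≤ M := by
    have := (H2 p c).length_le
    simpa using this
  obtain ⟨q, hq⟩ := hx M
  have hofn : agreesWith x (List.ofFn fun i : Fin M => x i) := agreesWith_ofFn x M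
  have hqa : (f p ++ [c]) <+: f q := by
    have h1 : (f p ++ [c]) <+: (List.ofFn fun i : Fin M => x i) :=
      agreesWith_prefix hfc hofn (by simp; omega)
    exact h1.trans hq
  rcases trichotomy p q with hpq | hqp | ⟨r, d, h1, h2⟩
  · obtain ⟨r, rfl⟩ := hpq
    rcases r with _ | ⟨d, r'⟩
    · exfalso
      have := hqa.length_le
      simp at this
    · have hd : d = c := by
        have hA : f p ++ [d] <+: f (p ++ d :: r') := by
          have ha : f p ++ [d] <+: f (p ++ [d]) := H2 p d
          have hb : f (p ++ [d]) <+: f ((p ++ [d]) ++ r') := H3 _ r'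
          have := ha.trans hb
          simpa [List.append_assoc] using this
        have := pp_eq hA hqa (by simp)
        simpa using this
      subst hd
      have hsub : f (p ++ [c]) <+: f (p ++ c :: r') := by
        have := H3 (p ++ [c]) r'
        simpa [List.append_assoc] using this
      have heq : f (p ++ [c]) = List.ofFn fun i : Fin M => x i :=
        pp_eq hsub hq (by simp [← hM])
      rw [heq]
      exact hofn
  · exfalso
    obtain ⟨r, rfl⟩ := hqp
    have h1 := (H3 q r).length_le
    have h2 := hqa.length_le
    simp at h2
    omega
  · exfalso
    obtain ⟨r1, rfl⟩ := h1
    obtain ⟨r2, rfl⟩ := h2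
    have hA : f r ++ [d] <+: f ((r ++ [d]) ++ r1) :=
      (H2 r d).trans (H3 (r ++ [d]) r1)
    have hB : f r ++ [!d] <+: f ((r ++ [!d]) ++ r2) :=
      (H2 r (!d)).trans (H3 (r ++ [!d]) r2)
    have hA' : f r ++ [d] <+: f ((r ++ [!d]) ++ r2) := by
      have : f r ++ [d] <+: f ((r ++ [d]) ++ r1) ++ [c] :=
        hA.trans (List.prefix_append _ _)
      exact this.trans hqa
    have := pp_eq hA' hB (by simp)
    simp at this

open Classical in
noncomputable def fatStep (n : ℕ) (T : Set (List Bool)) (s : List Bool) (m : ℕ) :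
    List Bool :=
  if h : ∃ t : List Bool, s <+: t ∧ Splits T t ∧ t.length % n = m then h.choose else s

lemma fatStep_spec {n : ℕ} {T : Set (List Bool)} {s : List Bool} {m : ℕ}
    (h : ∃ t : List Bool, s <+: t ∧ Splits T t ∧ t.length % n = m) :
    s <+: fatStep n T s m ∧ Splits T (fatStep n T s m) ∧
      (fatStep n T s m).length % n = m := by
  rw [fatStep, dif_pos h]
  exact h.choose_spec

noncomputable def fatChain (n : ℕ) (T : Set (List Bool)) (root : List Bool) :
    List Bool → List Bool
  | [] => fatStep n T root 0
  | c :: q => fatStep n T (fatChain n T root q ++ [c]) ((q.length + 1) % n)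

lemma fatChain_spec (n : ℕ) (hn : 0 < n) (T : Set (List Bool)) (hT : nFat n T)
    (root : List Bool) (hroot : root ∈ T) (q : List Bool) :
    Splits T (fatChain n T root q) ∧
      (fatChain n T root q).length % n = q.length % n := by
  induction q with
  | nil =>
    have h := hT.2.2 root hroot 0 hn
    have hsp := fatStep_spec h
    simp only [fatChain]
    exact ⟨hsp.2.1, by rw [hsp.2.2]; simp⟩
  | cons c q ih =>
    have hmem : fatChain n T root q ++ [c] ∈ T := by
      cases c
      · exact ih.1.2.1
      · exact ih.1.2.2
    have h := hT.2.2 _ hmem ((q.length + 1) % n) (Nat.mod_lt _ hn)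
    have hsp := fatStep_spec h
    simp only [fatChain]
    exact ⟨hsp.2.1, by rw [hsp.2.2]; simp⟩

lemma fatChain_prefix (n : ℕ) (hn : 0 < n) (T : Set (List Bool)) (hT : nFat n T)
    (root : List Bool) (hroot : root ∈ T) (q : List Bool) (c : Bool) :
    fatChain n T root q ++ [c] <+: fatChain n T root (c :: q) := by
  have ih := fatChain_spec n hn T hT root hroot q
  have hmem : fatChain n T root q ++ [c] ∈ T := by
    cases c
    · exact ih.1.2.1
    · exact ih.1.2.2
  have h := hT.2.2 _ hmem ((q.length + 1) % n) (Nat.mod_lt _ hn)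
  have hsp := fatStep_spec h
  simpa only [fatChain] using hsp.1

end Stmt13Aux

open Stmt13Aux in

/-- Adam has a winning strategy in `G_n(A)` iff `A` contains the branch set of
some `n`-fat tree. -/
theorem stmt13 (n : ℕ) (hn : 0 < n) (A : Set (ℕ → Bool)) :
    (AdamWins n A → ∃ T : Set (List Bool), nFat n T ∧ branches T ⊆ A) ∧
    (∀ T : Set (List Bool), nFat n T → branches T ⊆ A → AdamWins n A) := by
  constructor
  · rintro ⟨σ, hσ⟩
    have H1 : ∀ p : List Bool, (σ p).length % n = p.length % n := by
      intro p
      have h := (hσ (fun j => p.getD j false)).1 p.length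
      have e : (List.ofFn fun j : Fin p.length => p.getD (↑j) false) = p := by
        rw [ofFn_getD_eq_take p p.length le_rfl, List.take_length]
      rw [e] at h
      exact h.1
    have H2 : ∀ (p : List Bool) (c : Bool), σ p ++ [c] <+: σ (p ++ [c]) := by
      intro p c
      have h := (hσ (fun j => (p ++ [c]).getD j false)).1 p.length
      have e1 : (List.ofFn fun j : Fin p.length => (p ++ [c]).getD (↑j) false) = p := by
        rw [ofFn_getD_eq_take _ p.length (by simp)]
        simp
      have e2 : (List.ofFn fun j : Fin (p.length + 1) => (p ++ [c]).getD (↑j) false)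
          = p ++ [c] := by
        have hl : (p ++ [c]).length = p.length + 1 := by simp
        rw [ofFn_getD_eq_take _ _ (by simp), ← hl, List.take_length]
      have e3 : (p ++ [c]).getD p.length false = c := by
        rw [List.getD_eq_getElem _ _ (by simp)]
        simp
      rw [e1, e2, e3] at h
      exact h.2
    have H3 : ∀ r p : List Bool, σ p <+: σ (p ++ r) := by
      intro r
      induction r using List.reverseRecOn with
      | nil => intro p; simp
      | append_singleton r c ih =>
        intro p
        have h1 : σ p <+: σ (p ++ r) := ih p
        have h2 : σ (p ++ r) <+: σ (p ++ r) ++ [c] := List.prefix_append _ _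
        have h3 := H2 (p ++ r) c
        have := (h1.trans h2).trans h3
        simpa [List.append_assoc] using this
    refine ⟨{t | ∃ q : List Bool, t <+: σ q}, ⟨?_, ?_, ?_⟩, ?_⟩
    · rintro s ⟨q, hs⟩ t ht
      exact ⟨q, ht.trans hs⟩
    · exact ⟨σ [], [], List.prefix_refl _⟩
    · rintro s ⟨p, hs⟩ m hm
      set k := (m + n - p.length % n) % n with hk
      refine ⟨σ (p ++ List.replicate k false), hs.trans (H3 _ p),
        ⟨⟨_, List.prefix_refl _⟩, ⟨_, H2 _ false⟩, ⟨_, H2 _ true⟩⟩, ?_⟩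
      rw [H1]
      simp only [List.length_append, List.length_replicate]
      have hr : p.length % n < n := Nat.mod_lt _ hn
      have h1 : (p.length + k) % n = (p.length + (m + n - p.length % n)) % n := by
        rw [hk, Nat.add_mod_mod]
      have hdm := Nat.div_add_mod p.length n
      have h2 : p.length + (m + n - p.length % n) = n * (p.length / n) + (m + n) := by
        omega
      rw [h1, h2, Nat.mul_add_mod, Nat.add_mod_right, Nat.mod_eq_of_lt hm]
    · intro x hx
      have hx' : ∀ k : ℕ, ∃ q : List Bool,
          (List.ofFn fun i : Fin k => x i) <+: σ q := fun k => hx k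
      let P : ℕ → List Bool := fun i =>
        Nat.rec [] (fun _ pi => pi ++ [x (σ pi).length]) i
      have hPsucc : ∀ i, P (i + 1) = P i ++ [x (σ (P i)).length] := fun i => rfl
      have hP : ∀ i, agreesWith x (σ (P i)) := by
        intro i
        induction i with
        | zero =>
          exact key_base x σ (fun q => by simpa using H3 q []) hx'
        | succ i ih =>
          rw [hPsucc i]
          exact key_step x σ H2 (fun p r => H3 r p) hx' (P i) ih
      have hgrow : ∀ i, i ≤ (σ (P i)).length := by
        intro i
        induction i with
        | zero => exact Nat.zero_le _
        | succ i ih =>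
          have h := (H2 (P i) (x (σ (P i)).length)).length_le
          rw [← hPsucc i] at h
          simp only [List.length_append, List.length_singleton] at h
          omega
      set b : ℕ → Bool := fun j => x (σ (P j)).length with hb
      have hofb : ∀ i, (List.ofFn fun j : Fin i => b j) = P i := by
        intro i
        induction i with
        | zero => rfl
        | succ i ih =>
          rw [List.ofFn_succ', List.concat_eq_append]
          simp only [Fin.coe_castSucc, Fin.val_last]
          rw [ih, hPsucc i]
      have hlim : limitOf (fun i => σ (List.ofFn fun j : Fin i => b j)) = x := by
        funext m
        show (σ (List.ofFn fun j : Fin (m + 1) => b j)).getD m false = x m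
        rw [hofb]
        exact hP (m + 1) m (lt_of_lt_of_le (Nat.lt_succ_self m) (hgrow (m + 1)))
      have := (hσ b).2
      rwa [hlim] at this
  · intro T hT hTA
    obtain ⟨root, hroot⟩ := hT.2.1
    refine ⟨fun p => fatChain n T root p.reverse, ?_⟩
    intro b
    set s : ℕ → List Bool :=
      fun i => fatChain n T root (List.ofFn fun j : Fin i => b j).reverse with hs
    have hrev : ∀ i : ℕ, (List.ofFn fun j : Fin (i + 1) => b j).reverse
        = b i :: (List.ofFn fun j : Fin i => b j).reverse := by
      intro i
      rw [List.ofFn_succ', List.concat_eq_append, List.reverse_append]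
      simp
    have hspec := fun q => fatChain_spec n hn T hT root hroot q
    have hsplits : ∀ i, Splits T (s i) := fun i => (hspec _).1
    have hlen : ∀ i, (s i).length % n = i % n := by
      intro i
      have h := (hspec ((List.ofFn fun j : Fin i => b j).reverse)).2
      simpa using h
    have hpre : ∀ i, s i ++ [b i] <+: s (i + 1) := by
      intro i
      have h := fatChain_prefix n hn T hT root hroot
        ((List.ofFn fun j : Fin i => b j).reverse) (b i)
      show s i ++ [b i] <+: fatChain n T root (List.ofFn fun j : Fin (i+1) => b j).reverse
      rw [hrev i]
      exact h
    refine ⟨fun i => ⟨hlen i, hpre i⟩, ?_⟩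
    apply hTA
    intro k
    have hchain : ∀ i j, i ≤ j → s i <+: s j := by
      intro i j hij
      induction j with
      | zero =>
        have : i = 0 := Nat.le_zero.mp hij
        subst this
        exact List.prefix_refl _
      | succ j ihj =>
        rcases Nat.lt_or_ge i (j + 1) with h' | h'
        · have := ihj (by omega)
          exact this.trans ((List.prefix_append _ [b j]).trans (hpre j))
        · have : i = j + 1 := by omega
          subst this
          exact List.prefix_refl _
    have hgrow : ∀ i, i ≤ (s i).length := by
      intro i
      induction i with
      | zero => exact Nat.zero_le _
      | succ i ih =>
        have h := (hpre i).length_le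
        simp only [List.length_append, List.length_singleton] at h
        omega
    have hpref : (List.ofFn fun m : Fin k => limitOf s m) <+: s k := by
      apply prefix_of_getD (by simpa using hgrow k)
      intro m hm
      simp only [List.length_ofFn] at hm
      rw [List.getD_eq_getElem _ _ (by simpa using hm), List.getElem_ofFn]
      show limitOf s m = (s k).getD m false
      have h1 : (s (m + 1)).getD m false = (s k).getD m false :=
        getD_of_prefix (hchain (m + 1) k hm)
          (lt_of_lt_of_le (Nat.lt_succ_self m) (hgrow (m + 1)))
      exact h1
    exact hT.1 _ (hsplits k).1 _ hpref
end

section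
/- In the game G_n(A): if A ⊆ ∪_i X_i where each X_i ⊆ 2^ω is a set such that no two distinct elements of X_i first differ at a coordinate ≡ i (mod n), then Eve has a winning strategy in G_n(A). -/
open Classical in
/-- Eve's bit against the set `X i`, given Adam's last move `t`: the negation of
the common value at coordinate `|t|` of all elements of `X i` extending `t`. -/
noncomputable def eveBit (X : ℕ → Set (ℕ → Bool)) (i : ℕ) (t : List Bool) : Bool :=
  if h : ∃ x, x ∈ X i ∧ ∀ m < t.length, x m = t.getD m false
  then ! h.choose t.length else false

/-- Any two elements of a set omitting the color `i % n` that both extend a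
string `t` of length `≡ i (mod n)` agree at coordinate `|t|`. -/
lemma agree_at {n i : ℕ} {X : Set (ℕ → Bool)} (hX : omitsColor n (i % n) X)
    (t : List Bool) (ht : t.length % n = i % n)
    {x y : ℕ → Bool} (hx : x ∈ X) (hy : y ∈ X)
    (hxt : ∀ m < t.length, x m = t.getD m false)
    (hyt : ∀ m < t.length, y m = t.getD m false) :
    x t.length = y t.length := by
  by_contra hne
  have hxy : x ≠ y := fun h => hne (congrFun h t.length)
  have hmem : t.length ∈ {m | x m ≠ y m} := hne
  have hΔ : Δ x y = t.length := by
    refine le_antisymm (Nat.sInf_le hmem) (le_csInf ⟨_, hmem⟩ ?_)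
    intro m hm
    by_contra hlt
    push_neg at hlt
    exact hm ((hxt m hlt).trans (hyt m hlt).symm)
  exact hX x hx y hy hxy (by rw [hΔ, ht])

/-- If `A` is covered by countably many sets `X i`, where `X i` omits the color
`i mod n`, then Eve has a winning strategy in `G_n(A)`. -/
theorem stmt14 (n : ℕ) (hn : 0 < n) (A : Set (ℕ → Bool)) (X : ℕ → Set (ℕ → Bool))
    (hX : ∀ i, omitsColor n (i % n) (X i)) (hA : A ⊆ ⋃ i, X i) :
    EveWins n A := by
  classical
  refine ⟨fun h => eveBit X (h.length - 1) (h.getLastD []), ?_⟩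
  intro s hs hmemA
  -- the strategy applied to the history at stage i is `eveBit X i (s i)`
  have hτ : ∀ i : ℕ,
      eveBit X ((List.ofFn fun j : Fin (i + 1) => s j).length - 1)
        ((List.ofFn fun j : Fin (i + 1) => s j).getLastD []) = eveBit X i (s i) := by
    intro i
    have h1 : (List.ofFn fun j : Fin (i + 1) => s j).length - 1 = i := by simp
    have h2 : (List.ofFn fun j : Fin (i + 1) => s j).getLastD [] = s i := by
      rw [List.getLastD_eq_getLast?, List.getLast?_eq_getElem?]
      simp only [List.length_ofFn, Nat.add_sub_cancel, List.getElem?_ofFn]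
      simp [List.ofFnNthVal]
    rw [h1, h2]
  -- basic chain facts
  have hpref : ∀ i, s i <+: s (i + 1) := fun i =>
    (List.prefix_append (s i) _).trans (hs i).2
  have hchain : ∀ j k, j ≤ k → s j <+: s k := by
    intro j k hjk
    induction k, hjk using Nat.le_induction with
    | base => exact List.prefix_refl _
    | succ k hk ih => exact ih.trans (hpref k)
  have hlen : ∀ i, (s i).length < (s (i + 1)).length := by
    intro i
    have := (hs i).2.length_le
    simp at this
    omega
  have hlen' : ∀ i, i ≤ (s i).length := by
    intro i
    induction i with
    | zero => exact Nat.zero_le _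
    | succ i ih => exact Nat.lt_of_le_of_lt ih (hlen i)
  -- the limit real agrees with each `s i` on its domain
  have hx_eq : ∀ i m, m < (s i).length → limitOf s m = (s i).getD m false := by
    intro i m hm
    have hm1 : m < (s (m + 1)).length := Nat.lt_of_lt_of_le (Nat.lt_succ_self m) (hlen' (m + 1))
    show (s (m + 1)).getD m false = (s i).getD m false
    rw [List.getD_eq_getElem _ _ hm1, List.getD_eq_getElem _ _ hm]
    rcases le_total (m + 1) i with h | h
    · exact (hchain _ _ h).getElem hm1
    · exact ((hchain _ _ h).getElem hm).symm
  -- suppose the limit lies in `A`, hence in some `X i`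
  obtain ⟨_, ⟨i, rfl⟩, hxi⟩ := hA hmemA
  set x : ℕ → Bool := limitOf s with hxdef
  let t : List Bool := s i
  have htdef : t = s i := rfl
  have hext : ∀ m < t.length, x m = t.getD m false := fun m hm => hx_eq i m hm
  have hex : ∃ z, z ∈ X i ∧ ∀ m < t.length, z m = t.getD m false := ⟨x, hxi, hext⟩
  -- identify Eve's bit at stage i
  have hb : eveBit X i t = ! hex.choose t.length := by
    rw [eveBit, dif_pos hex]
  -- the limit's value at coordinate `|t|` is Eve's bit
  have hxL : x t.length = eveBit X i t := by
    have hLcat : t.length < (t ++ [eveBit X i t]).length := by simp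
    have hL1 : t.length < (s (i + 1)).length := by
      have h2 := (hs i).2.length_le
      beta_reduce at h2
      rw [hτ i] at h2
      simp only [List.length_append, List.length_singleton] at h2
      show (s i).length < (s (i + 1)).length
      omega
    have hxval : x t.length = (s (i + 1)).getD t.length false := hx_eq (i + 1) t.length hL1
    have hpre : t ++ [eveBit X i t] <+: s (i + 1) := by
      have h2 := (hs i).2
      beta_reduce at h2
      rwa [hτ i] at h2
    have := hpre.getElem hLcat
    rw [hxval, List.getD_eq_getElem _ _ hL1, ← this]
    simp
  -- but all elements of `X i` extending `t` share the same bit there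
  have hagree : x t.length = hex.choose t.length :=
    agree_at (hX i) t (hs i).1 hxi hex.choose_spec.1 hext hex.choose_spec.2
  rw [hb, hagree] at hxL
  exact Bool.not_ne_self _ hxL.symm
end

section
/- If Eve has a winning strategy in the game G_n(A), then A belongs to the ideal J_n: A is covered by countably many closed sets each omitting a color under c_n. -/
/-!
Fix a winning strategy `τ` for Eve. Call a real `x` refuted at a history `p` of Adam's moves
beyond an initial segment `w` of `x` if every move `x ↾ L` that Adam could legally play next
(`|w| ≤ L ≡ |p| mod n`) is answered by Eve with the bit `≠ x L`. Two reals refuted at the same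
`(p, w)` cannot first differ at such an `L`, since there they get the same answer from Eve; so
each of these countably many closed sets omits the color `|p| mod n`. A real that is refuted
nowhere lets Adam greedily pick moves along it that Eve answers along it, so it is the outcome of
a run against `τ` and hence lies outside `A`.
-/

def IsRunAgainst (n : ℕ) (τ : List (List Bool) → Bool) (s : ℕ → List Bool) : Prop :=
  ∀ i : ℕ, (s i).length % n = i % n ∧
    s i ++ [τ (List.ofFn fun j : Fin (i + 1) => s j)] <+: s (i + 1)

def prefixList (x : ℕ → Bool) (L : ℕ) : List Bool := List.ofFn fun j : Fin L => x j

@[simp] lemma length_prefixList (x : ℕ → Bool) (L : ℕ) : (prefixList x L).length = L :=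
  List.length_ofFn

lemma prefixList_succ (x : ℕ → Bool) (L : ℕ) :
    prefixList x (L + 1) = prefixList x L ++ [x L] :=
  List.ofFn_succ_last

lemma prefixList_prefix_of_le (x : ℕ → Bool) {a b : ℕ} (h : a ≤ b) :
    prefixList x a <+: prefixList x b := by
  induction b, h using Nat.le_induction with
  | base => exact List.prefix_refl _
  | succ b _ ih => exact ih.trans (prefixList_succ x b ▸ List.prefix_append _ _)

lemma limitOf_prefixList (x : ℕ → Bool) {L : ℕ → ℕ} (hL : StrictMono L) :
    limitOf (fun i => prefixList x (L i)) = x := by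
  funext m
  have hm : m < L (m + 1) := hL.id_le (m + 1)
  simp [limitOf, prefixList, hm]

lemma prefixList_congr {x y : ℕ → Bool} {L : ℕ} (h : ∀ j < L, x j = y j) :
    prefixList x L = prefixList y L :=
  congrArg List.ofFn (funext fun j => h j j.2)

lemma apply_Δ_ne {x y : ℕ → Bool} (h : x ≠ y) : x (Δ x y) ≠ y (Δ x y) :=
  Nat.sInf_mem (Function.ne_iff.mp h)

lemma eq_of_lt_Δ {x y : ℕ → Bool} {j : ℕ} (h : j < Δ x y) : x j = y j :=
  not_not.mp (Nat.notMem_of_lt_sInf h)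

lemma isClosed_of_determined {k : ℕ} {S : Set (ℕ → Bool)}
    (hS : ∀ x y, (∀ j < k, x j = y j) → x ∈ S → y ∈ S) : IsClosed S := by
  let r : (ℕ → Bool) → (Fin k → Bool) := fun x j => x j
  have hS' : S = r ⁻¹' (r '' S) := by
    refine (Set.subset_preimage_image r S).antisymm ?_
    rintro y ⟨x, hx, hxy⟩
    exact hS x y (fun j hj => congrFun hxy ⟨j, hj⟩) hx
  rw [hS']
  exact (isClosed_discrete _).preimage (continuous_pi fun j => continuous_apply _)

section Refuted

variable (n : ℕ) (τ : List (List Bool) → Bool)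

def refutedSet (p : List (List Bool)) (w : List Bool) : Set (ℕ → Bool) :=
  {x | prefixList x w.length = w ∧
    ∀ L, w.length ≤ L → L % n = p.length % n → x L = !τ (p ++ [prefixList x L])}

lemma isClosed_refutedSet (p : List (List Bool)) (w : List Bool) :
    IsClosed (refutedSet n τ p w) := by
  rw [refutedSet, Set.ofPred_and, Set.ofPred_forall]
  refine IsClosed.inter ?_ (isClosed_iInter fun L => ?_)
  · exact isClosed_of_determined (k := w.length) fun x y hxy hx =>
      (prefixList_congr hxy).symm.trans hx
  · refine isClosed_of_determined (k := L + 1) fun x y hxy hx hwL hLn => ?_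
    rw [← hxy L L.lt_succ_self, ← prefixList_congr fun j hj => hxy j (Nat.lt_succ_of_lt hj)]
    exact hx hwL hLn

lemma omitsColor_refutedSet (p : List (List Bool)) (w : List Bool) :
    omitsColor n (p.length % n) (refutedSet n τ p w) := by
  intro x ⟨hxw, hx⟩ y ⟨hyw, hy⟩ hxy hcolor
  have hwΔ : w.length ≤ Δ x y := by
    by_contra! hlt
    have hpre : prefixList x w.length = prefixList y w.length := hxw.trans hyw.symm
    exact apply_Δ_ne hxy (congrFun (List.ofFn_injective hpre) ⟨_, hlt⟩)
  have hsame : prefixList x (Δ x y) = prefixList y (Δ x y) :=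
    prefixList_congr fun _ => eq_of_lt_Δ
  refine apply_Δ_ne hxy ?_
  rw [hx _ hwΔ hcolor, hy _ hwΔ hcolor, hsame]

lemma exists_answered_move {x : ℕ → Bool} (hx : ∀ p w, x ∉ refutedSet n τ p w)
    (p : List (List Bool)) (N : ℕ) :
    ∃ L, N ≤ L ∧ L % n = p.length % n ∧ x L = τ (p ++ [prefixList x L]) := by
  have := hx p (prefixList x N)
  simp only [refutedSet, length_prefixList, Set.mem_ofPred_eq, true_and, not_forall] at this
  obtain ⟨L, hNL, hLn, hL⟩ := this
  exact ⟨L, hNL, hLn, Bool.not_eq_not.mp hL⟩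

end Refuted

section Greedy

variable (x : ℕ → Bool) (next : List (List Bool) → ℕ → ℕ)

def greedyLength : ℕ → ℕ
  | 0 => next [] 0
  | i + 1 => next (List.ofFn fun j : Fin (i + 1) => prefixList x (greedyLength j))
      (greedyLength i + 1)
decreasing_by all_goals omega

def greedyHistory (i : ℕ) : List (List Bool) :=
  List.ofFn fun j : Fin i => prefixList x (greedyLength x next j)

variable {x next}

lemma length_greedyHistory (i : ℕ) : (greedyHistory x next i).length = i :=
  List.length_ofFn

lemma greedyHistory_succ (i : ℕ) :
    greedyHistory x next (i + 1) =
      greedyHistory x next i ++ [prefixList x (greedyLength x next i)] :=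
  List.ofFn_succ_last

lemma greedyLength_succ (i : ℕ) :
    greedyLength x next (i + 1) =
      next (greedyHistory x next (i + 1)) (greedyLength x next i + 1) := by
  rw [greedyLength, greedyHistory]

lemma exists_greedyLength_eq (i : ℕ) :
    ∃ N, greedyLength x next i = next (greedyHistory x next i) N := by
  cases i with
  | zero => exact ⟨0, by rw [greedyLength, greedyHistory, List.ofFn_zero]⟩
  | succ i => exact ⟨_, greedyLength_succ i⟩

lemma isRunAgainst_greedy {n : ℕ} {τ : List (List Bool) → Bool}
    (hnext : ∀ p N, N ≤ next p N ∧ next p N % n = p.length % n ∧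
      x (next p N) = τ (p ++ [prefixList x (next p N)])) :
    IsRunAgainst n τ (fun i => prefixList x (greedyLength x next i)) ∧
      limitOf (fun i => prefixList x (greedyLength x next i)) = x := by
  have hmono : StrictMono (greedyLength x next) := strictMono_nat_of_lt_succ fun i => by
    rw [greedyLength_succ]
    exact (hnext _ _).1
  refine ⟨fun i => ?_, limitOf_prefixList x hmono⟩
  obtain ⟨N, hN⟩ := exists_greedyLength_eq (x := x) (next := next) i
  have hanswer : τ (greedyHistory x next (i + 1)) = x (greedyLength x next i) := by
    rw [greedyHistory_succ, hN]
    exact (hnext _ N).2.2.symm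
  refine ⟨by simpa [hN, length_greedyHistory] using (hnext (greedyHistory x next i) N).2.1, ?_⟩
  rw [← greedyHistory, hanswer, ← prefixList_succ]
  exact prefixList_prefix_of_le x (hmono (Nat.lt_succ_self i))

end Greedy

/-- If Eve has a winning strategy in `G_n(A)`, then `A ∈ J_n`: it is covered by
countably many closed sets each omitting a `c_n`-color. -/
theorem stmt15 (n : ℕ) (hn : 0 < n) (A : Set (ℕ → Bool)) (h : EveWins n A) :
    ∃ F : ℕ → Set (ℕ → Bool),
      (∀ i, IsClosed (F i) ∧ ∃ m < n, omitsColor n m (F i)) ∧ A ⊆ ⋃ i, F i := by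
  obtain ⟨τ, hτ⟩ := h
  obtain ⟨f, hf⟩ := exists_surjective_nat (List (List Bool) × List Bool)
  refine ⟨fun k => refutedSet n τ (f k).1 (f k).2, fun k => ⟨isClosed_refutedSet n τ _ _,
    _, Nat.mod_lt _ hn, omitsColor_refutedSet n τ _ _⟩, fun x hxA => ?_⟩
  by_contra hcover
  have hx : ∀ p w, x ∉ refutedSet n τ p w := fun p w hpw =>
    let ⟨k, hk⟩ := hf (p, w)
    hcover (Set.mem_iUnion.mpr ⟨k, hk ▸ hpw⟩)
  choose next hnext using exists_answered_move n τ hx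
  obtain ⟨hrun, hlimit⟩ := isRunAgainst_greedy hnext
  exact hτ _ hrun (by rwa [hlimit])
end

section
/- The uniformity of the ideal K_ω is at least 𝔭: every subset of (2^ω)^ω of cardinality less than the pseudo-intersection number 𝔭 can be covered by countably many graphs of partial Borel functions from (2^ω)^{ω∖{n}} to 2^ω. -/
/-! Pick for every `x ∈ (2^ω)^ω` a column `d x` such that `x` is determined by `d x` together
with its other columns. On `A ∩ {d = k}` the column `k` is then a function of the remaining
columns, and it suffices to extend it to a Borel function. This works because a set `Z` of
size `< 𝔭` in a countably separated space is a Q-set: for `Y ⊆ Z`, the sets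
`{n | z ∈ U n ↔ z ∈ Y}`, `z ∈ Z`, over a countable family `U` realizing every finite pattern
infinitely often have the strong finite intersection property, and along a pseudo-intersection
of them the sets `U n` converge to `Y` pointwise on `Z`, so `Y = Z ∩ liminf U n`. -/

/-- The pseudo-intersection number `𝔭`: the least cardinality of a family of
subsets of `ℕ` with the strong finite intersection property but with no
infinite pseudo-intersection. -/
noncomputable def pNum : Cardinal :=
  sInf {κ | ∃ F : Set (Set ℕ), Cardinal.mk F = κ ∧
    (∀ S : Finset (Set ℕ), ↑S ⊆ F → Set.Infinite (⋂ s ∈ S, (s : Set ℕ))) ∧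
    ¬ ∃ P : Set ℕ, P.Infinite ∧ ∀ X ∈ F, (P \ X).Finite}

/-- `G` is the graph of a partial Borel function `(2^ω)^{ω∖{k}} → 2^ω` for some `k ∈ ω`. -/
def isBorelGraphW (G : Set (ℕ → ℕ → Bool)) : Prop :=
  ∃ k : ℕ, ∃ f : (ℕ → ℕ → Bool) → ℕ → Bool, ∃ D : Set (ℕ → ℕ → Bool),
    Measurable f ∧ MeasurableSet D ∧
    (∀ x y : ℕ → ℕ → Bool, (∀ j, j ≠ k → x j = y j) → f x = f y) ∧
    G = {x | x ∈ D ∧ x k = f x}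

/-- Membership in the σ-ideal `K_ω` σ-generated by such graphs. -/
def memKW (A : Set (ℕ → ℕ → Bool)) : Prop :=
  ∃ G : ℕ → Set (ℕ → ℕ → Bool), (∀ i, isBorelGraphW (G i)) ∧ A ⊆ ⋃ i, G i

open Set Filter Function

theorem exists_pseudoIntersection_of_mk_lt_pNum {F : Set (Set ℕ)} (hF : Cardinal.mk F < pNum)
    (hsfip : ∀ S : Finset (Set ℕ), ↑S ⊆ F → (⋂ s ∈ S, s).Infinite) :
    ∃ P : Set ℕ, P.Infinite ∧ ∀ X ∈ F, (P \ X).Finite := by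
  by_contra hno
  exact hF.not_ge (csInf_le' ⟨F, rfl, hsfip, hno⟩)

def RealizesFinitePatterns {ι α : Type*} (U : ι → Set α) : Prop :=
  ∀ (s : Finset α) (Y : Set α), {i | ∀ z ∈ s, z ∈ U i ↔ z ∈ Y}.Infinite

namespace RealizesFinitePatterns

variable {ι κ α β : Type*}

theorem preimage {U : ι → Set β} (hU : RealizesFinitePatterns U) {f : α → β}
    (hf : Injective f) : RealizesFinitePatterns fun i => f ⁻¹' U i := by
  classical
  intro s Y
  refine (hU (s.image f) (f '' Y)).mono fun i hi z hz => ?_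
  simpa [hf.mem_set_image, hf.eq_iff] using hi (f z) (Finset.mem_image_of_mem f hz)

theorem extend {U : ι → Set α} (hU : RealizesFinitePatterns U) {e : ι → κ}
    (he : Injective e) : RealizesFinitePatterns (extend e U fun _ => ∅) := by
  intro s Y
  refine ((hU s Y).image he.injOn).mono ?_
  rintro _ ⟨i, hi, rfl⟩
  simpa only [mem_ofPred_eq, he.extend_apply] using hi

end RealizesFinitePatterns

theorem realizesFinitePatterns_cylinder (β : Type*) :
    RealizesFinitePatterns fun p : Σ N : ℕ, Set (Fin N → β) =>
      {x : ℕ → β | (fun i : Fin p.1 => x i) ∈ p.2} := by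
  intro s Y
  have hpair : ∀ x ∈ s, ∀ y ∈ s, ∀ᶠ N in atTop,
      (fun i : Fin N => x i) = (fun i : Fin N => y i) → x = y := by
    intro x _ y _
    by_cases hxy : x = y
    · exact Eventually.of_forall fun _ _ => hxy
    obtain ⟨n, hn⟩ := Function.ne_iff.1 hxy
    filter_upwards [eventually_gt_atTop n] with N hN h
    exact absurd (congrFun h ⟨n, hN⟩) hn
  have hinj : {N | InjOn (fun (x : ℕ → β) (i : Fin N) => x i) (s : Set (ℕ → β))}.Infinite := by
    refine Nat.frequently_atTop_iff_infinite.1 (Eventually.frequently ?_)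
    simpa only [InjOn, Finset.mem_coe, eventually_all_finset] using hpair
  let code (N : ℕ) : Σ N : ℕ, Set (Fin N → β) := ⟨N, (fun x (i : Fin N) => x i) '' (Y ∩ s)⟩
  have hcode : Injective code := fun _ _ h => congrArg Sigma.fst h
  refine (hinj.image hcode.injOn).mono ?_
  rintro _ ⟨N, hN, rfl⟩ z hz
  constructor
  · rintro ⟨y, ⟨hyY, hys⟩, hyz⟩
    rwa [← hN hys hz hyz]
  · exact fun hzY => ⟨z, ⟨hzY, hz⟩, rfl⟩

section Measurable

variable {α : Type} [MeasurableSpace α]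

theorem exists_nat_measurableSet_realizesFinitePatterns_of_countable {ι : Type*} [Countable ι]
    {U : ι → Set α} (hUm : ∀ i, MeasurableSet (U i)) (hU : RealizesFinitePatterns U) :
    ∃ V : ℕ → Set α, (∀ n, MeasurableSet (V n)) ∧ RealizesFinitePatterns V := by
  obtain ⟨e, he⟩ := exists_injective_nat ι
  refine ⟨Function.extend e U fun _ => ∅, fun n => ?_, hU.extend he⟩
  by_cases hn : ∃ i, e i = n
  · obtain ⟨i, rfl⟩ := hn
    simpa only [he.extend_apply] using hUm i
  · simp only [extend_apply' _ _ _ hn, MeasurableSet.empty]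

theorem exists_nat_measurableSet_realizesFinitePatterns [MeasurableSpace.CountablySeparated α] :
    ∃ V : ℕ → Set α, (∀ n, MeasurableSet (V n)) ∧ RealizesFinitePatterns V := by
  obtain ⟨f, hfm, hf⟩ := MeasurableSpace.measurable_injection_nat_bool_of_countablySeparated α
  refine exists_nat_measurableSet_realizesFinitePatterns_of_countable (fun p => hfm ?_)
    ((realizesFinitePatterns_cylinder Bool).preimage hf)
  exact measurableSet_preimage (by fun_prop) (Set.toFinite _).measurableSet

theorem exists_measurableSet_inter_eq_of_realizesFinitePatterns {U : ℕ → Set α}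
    (hUm : ∀ n, MeasurableSet (U n)) (hU : RealizesFinitePatterns U) {Y Z : Set α}
    (hYZ : Y ⊆ Z) (hZ : Cardinal.mk Z < pNum) :
    ∃ B, MeasurableSet B ∧ Z ∩ B = Y := by
  let good (z : α) : Set ℕ := {n | z ∈ U n ↔ z ∈ Y}
  have hsfip : ∀ S : Finset (Set ℕ), ↑S ⊆ good '' Z → (⋂ s ∈ S, s).Infinite := by
    intro S hS
    obtain ⟨L, -, rfl⟩ := Finset.subset_set_image_iff.1 hS
    refine (hU L Y).mono fun n hn => mem_iInter₂.2 fun s hs => ?_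
    obtain ⟨z, hz, rfl⟩ := Finset.mem_image.1 hs
    exact hn z hz
  obtain ⟨P, hPinf, hP⟩ :=
    exists_pseudoIntersection_of_mk_lt_pNum (Cardinal.mk_image_le.trans_lt hZ) hsfip
  have hgood : ∀ z ∈ Z, ∃ N, ∀ n ∈ P, N ≤ n → (z ∈ U n ↔ z ∈ Y) := by
    intro z hz
    obtain ⟨N, hN⟩ := (hP _ (mem_image_of_mem good hz)).bddAbove
    refine ⟨N + 1, fun n hnP hNn => ?_⟩
    by_contra hn
    exact absurd (hN ⟨hnP, hn⟩) (by omega)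
  refine ⟨⋃ N, ⋂ n ∈ P ∩ Ici N, U n,
    .iUnion fun N => .biInter (to_countable _) fun n _ => hUm n, ?_⟩
  apply Subset.antisymm
  · rintro z ⟨hz, hzB⟩
    obtain ⟨N, hN⟩ := hgood z hz
    obtain ⟨N', hN'⟩ := mem_iUnion.1 hzB
    obtain ⟨n, hnP, hn⟩ := hPinf.exists_gt (max N N')
    exact (hN n hnP (by omega)).1 (mem_iInter₂.1 hN' n ⟨hnP, show N' ≤ n by omega⟩)
  · intro z hzY
    obtain ⟨N, hN⟩ := hgood z (hYZ hzY)
    exact ⟨hYZ hzY, mem_iUnion.2 ⟨N, mem_iInter₂.2 fun n hn => (hN n hn.1 hn.2).2 hzY⟩⟩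

variable [MeasurableSpace.CountablySeparated α]

theorem exists_measurableSet_inter_eq_of_mk_lt_pNum {Y Z : Set α} (hYZ : Y ⊆ Z)
    (hZ : Cardinal.mk Z < pNum) : ∃ B, MeasurableSet B ∧ Z ∩ B = Y := by
  obtain ⟨U, hUm, hU⟩ := exists_nat_measurableSet_realizesFinitePatterns (α := α)
  exact exists_measurableSet_inter_eq_of_realizesFinitePatterns hUm hU hYZ hZ

theorem exists_measurable_eqOn_of_mk_lt_pNum {ι : Type*} {Z : Set α}
    (hZ : Cardinal.mk Z < pNum) (g : α → ι → Bool) :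
    ∃ F : α → ι → Bool, Measurable F ∧ EqOn F g Z := by
  classical
  choose B hBm hB using fun i =>
    exists_measurableSet_inter_eq_of_mk_lt_pNum (Y := {z ∈ Z | g z i = true}) (fun _ h => h.1) hZ
  refine ⟨fun z i => decide (z ∈ B i), measurable_pi_lambda _ fun i => ?_, fun z hz => ?_⟩
  · exact measurable_to_bool (by convert hBm i; ext; simp)
  · funext i
    have := congrArg (z ∈ ·) (hB i)
    simp only [mem_inter_iff, mem_ofPred_eq, hz, true_and, eq_iff_iff] at this
    simp [this]

end Measurable

/-- `d x` lies past the last coordinate where `x` differs from a fixed representative of its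
class modulo finite changes, so `x (d x)` can be read off that representative. -/
theorem exists_coord_determined_by_others (β : Type*) :
    ∃ d : (ℕ → β) → ℕ, ∀ x y, d x = d y → (∀ j ≠ d x, x j = y j) → x = y := by
  let r (x : ℕ → β) : ℕ → β := (x : Germ cofinite β).out
  have hr : ∀ x, ∀ᶠ j in atTop, x j = r x j := fun x => by
    rw [← Nat.cofinite_eq_atTop]
    exact Germ.coe_eq.1 (Quotient.out_eq _).symm
  choose d hd using fun x => eventually_atTop.1 (hr x)
  refine ⟨d, fun x y hdxy hxy => funext fun j => ?_⟩
  by_cases hj : j = d x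
  · have hrxy : r x = r y := by
      refine congrArg Quotient.out (Germ.coe_eq.2 (eventually_cofinite.2 ?_))
      exact (finite_singleton (d x)).subset fun i hi => of_not_not fun h => hi (hxy i h)
    subst hj
    calc x (d x) = r x (d x) := hd x _ le_rfl
      _ = r y (d y) := by rw [hrxy, hdxy]
      _ = y (d x) := by rw [hdxy, ← hd y _ le_rfl]
  · exact hxy j hj

theorem exists_isBorelGraphW_superset {S : Set (ℕ → ℕ → Bool)} (hS : Cardinal.mk S < pNum)
    (k : ℕ) (hk : ∀ x ∈ S, ∀ y ∈ S, (∀ j ≠ k, x j = y j) → x = y) :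
    ∃ G, isBorelGraphW G ∧ S ⊆ G := by
  let ζ (x : ℕ → ℕ → Bool) : ℕ → ℕ → Bool := update x k fun _ => false
  have hζ : ∀ x y, ζ x = ζ y ↔ ∀ j ≠ k, x j = y j := fun x y => by
    refine ⟨fun h j hj => by simpa [ζ, update_of_ne hj] using congrFun h j, fun h => ?_⟩
    funext j
    by_cases hj : j = k
    · simp [ζ, hj]
    · simp [ζ, update_of_ne hj, h j hj]
  have hinj : InjOn ζ S := fun x hx y hy h => hk x hx y hy ((hζ x y).1 h)
  obtain ⟨F, hFm, hF⟩ := exists_measurable_eqOn_of_mk_lt_pNum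
    (Cardinal.mk_image_le.trans_lt hS) fun z => invFunOn ζ S z k
  refine ⟨{x | x ∈ univ ∧ x k = F (ζ x)}, ⟨k, F ∘ ζ, univ, hFm.comp measurable_update_left,
    .univ, fun x y h => congrArg F ((hζ x y).2 h), rfl⟩, fun x hx => ⟨mem_univ x, ?_⟩⟩
  rw [hF (mem_image_of_mem ζ hx)]
  exact (congrFun (hinj.leftInvOn_invFunOn hx) k).symm

/-- `𝔭 ≤ non(K_ω)`: every subset of `(2^ω)^ω` of size `< 𝔭` is covered by
countably many graphs of partial Borel functions, i.e. belongs to `K_ω`. -/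
theorem stmt17 (A : Set (ℕ → ℕ → Bool)) (h : Cardinal.mk A < pNum) : memKW A := by
  obtain ⟨d, hd⟩ := exists_coord_determined_by_others (ℕ → Bool)
  choose G hG hAG using fun k => exists_isBorelGraphW_superset (S := {x ∈ A | d x = k})
    ((Cardinal.mk_le_mk_of_subset fun _ hx => hx.1).trans_lt h) k
    fun x hx y hy hxy => hd x y (hx.2.trans hy.2.symm) (hx.2 ▸ hxy)
  exact ⟨G, hG, fun x hx => mem_iUnion.2 ⟨d x, hAG _ ⟨hx, rfl⟩⟩⟩
end

section
/- Every partial function g : 2^ω → 2^ω whose domain has cardinality less than 𝔭 extends to a total Borel function f : 2^ω → 2^ω. -/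
noncomputable section

namespace Stmt18Aux

open Classical

/-- the defining set of `pNum` -/
def PFam : Set Cardinal :=
  {κ | ∃ F : Set (Set ℕ), Cardinal.mk F = κ ∧
    (∀ S : Finset (Set ℕ), ↑S ⊆ F → Set.Infinite (⋂ s ∈ S, (s : Set ℕ))) ∧
    ¬ ∃ P : Set ℕ, P.Infinite ∧ ∀ X ∈ F, (P \ X).Finite}

abbrev Sig : Type := ℕ × Finset (List Bool)

noncomputable instance : Denumerable Sig := Denumerable.ofEncodableOfInfinite Sig

noncomputable def enc : Sig ≃ ℕ := Denumerable.eqv Sig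

noncomputable def dec (n : ℕ) : Sig := enc.symm n

lemma dec_enc (p : Sig) : dec (enc p) = p := enc.symm_apply_apply p

def brMem (x : ℕ → Bool) (s : List Bool) : Prop := ∀ i : Fin s.length, s.get i = x i

def Good (p : Sig) : Prop := ∀ s ∈ p.2, p.1 ≤ s.length

def NS (x : ℕ → Bool) : Set ℕ := {n | Good (dec n) ∧ ∃ s ∈ (dec n).2, brMem x s}
def NM (y : ℕ → Bool) : Set ℕ := {n | Good (dec n) ∧ ∀ s ∈ (dec n).2, ¬ brMem y s}
def NK (m : ℕ) : Set ℕ := {n | Good (dec n) ∧ m ≤ (dec n).1}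

def Core (FA FB : Set (ℕ → Bool)) (m₀ : ℕ) : Set ℕ :=
  {n | Good (dec n) ∧ m₀ ≤ (dec n).1 ∧ (∀ x ∈ FA, ∃ s ∈ (dec n).2, brMem x s) ∧
      (∀ y ∈ FB, ∀ s ∈ (dec n).2, ¬ brMem y s)}

lemma core_subset_NS {FA FB : Set (ℕ → Bool)} {m₀ : ℕ} {x : ℕ → Bool} (hx : x ∈ FA) :
    Core FA FB m₀ ⊆ NS x := fun n hn => ⟨hn.1, hn.2.2.1 x hx⟩

lemma core_subset_NM {FA FB : Set (ℕ → Bool)} {m₀ : ℕ} {y : ℕ → Bool} (hy : y ∈ FB) :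
    Core FA FB m₀ ⊆ NM y := fun n hn => ⟨hn.1, hn.2.2.2 y hy⟩

lemma core_subset_NK {FA FB : Set (ℕ → Bool)} {m₀ m : ℕ} (hm : m ≤ m₀) :
    Core FA FB m₀ ⊆ NK m := fun n hn => ⟨hn.1, le_trans hm hn.2.1⟩

lemma core_mono {FA FA' FB FB' : Set (ℕ → Bool)} {m₀ m₀' : ℕ}
    (hA : FA ⊆ FA') (hB : FB ⊆ FB') (hm : m₀ ≤ m₀') :
    Core FA' FB' m₀' ⊆ Core FA FB m₀ := by
  intro n hn
  exact ⟨hn.1, le_trans hm hn.2.1, fun x hx => hn.2.2.1 x (hA hx),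
    fun y hy => hn.2.2.2 y (hB hy)⟩

lemma core_infinite {FA FB : Set (ℕ → Bool)} (hFA : FA.Finite) (hFB : FB.Finite)
    (hne : ∀ x ∈ FA, ∀ y ∈ FB, x ≠ y) (m₀ : ℕ) : (Core FA FB m₀).Infinite := by
  classical
  set TA := hFA.toFinset with hTA
  set TB := hFB.toFinset with hTB
  set dpt : (ℕ → Bool) → (ℕ → Bool) → ℕ := fun x y =>
    if h : ∃ d, x d ≠ y d then Nat.find h else 0 with hdptdef
  have hdpt : ∀ x ∈ FA, ∀ y ∈ FB, x (dpt x y) ≠ y (dpt x y) := by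
    intro x hx y hy
    have hxy := hne x hx y hy
    have h : ∃ d, x d ≠ y d := by
      by_contra hc; push_neg at hc; exact hxy (funext hc)
    simp only [hdptdef, dif_pos h]
    exact Nat.find_spec h
  set L0 : ℕ := TA.sup (fun x => TB.sup fun y => dpt x y + 1) with hL0def
  have hL0 : ∀ x ∈ FA, ∀ y ∈ FB, dpt x y < L0 := by
    intro x hx y hy
    have hx' : x ∈ TA := hFA.mem_toFinset.mpr hx
    have hy' : y ∈ TB := hFB.mem_toFinset.mpr hy
    calc dpt x y < dpt x y + 1 := Nat.lt_succ_self _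
      _ ≤ TB.sup (fun y => dpt x y + 1) := Finset.le_sup (f := fun y => dpt x y + 1) hy'
      _ ≤ L0 := Finset.le_sup (f := fun x => TB.sup fun y => dpt x y + 1) hx'
  set l : ℕ → ℕ := fun m => max (m₀ + m) L0 with hldef
  set u : ℕ → Finset (List Bool) :=
    fun m => TA.image fun x => List.ofFn fun i : Fin (l m) => x i with hudef
  have hulen : ∀ m, ∀ s ∈ u m, s.length = l m := by
    intro m s hs
    simp only [hudef, Finset.mem_image] at hs
    obtain ⟨x, -, rfl⟩ := hs
    simp
  apply Set.infinite_of_injective_forall_mem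
    (f := fun m : ℕ => enc (m₀ + m, u m))
  · intro a b hab
    have := enc.injective hab
    have : m₀ + a = m₀ + b := congrArg Prod.fst this
    omega
  · intro m
    have hdec : dec (enc (m₀ + m, u m)) = (m₀ + m, u m) := dec_enc _
    refine ⟨?_, ?_, ?_, ?_⟩ <;> rw [hdec]
    · intro s hs
      rw [hulen m s hs]
      exact le_max_left _ _
    · exact Nat.le_add_right m₀ m
    · intro x hx
      refine ⟨List.ofFn fun i : Fin (l m) => x i, ?_, ?_⟩
      · simp only [hudef, Finset.mem_image]
        exact ⟨x, hFA.mem_toFinset.mpr hx, rfl⟩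
      · intro i
        rw [List.get_ofFn]
        simp
    · intro y hy s hs hbr
      simp only [hudef, Finset.mem_image] at hs
      obtain ⟨x, hx', rfl⟩ := hs
      have hx : x ∈ FA := hFA.mem_toFinset.mp hx'
      have hd : dpt x y < (List.ofFn fun i : Fin (l m) => x i).length := by
        rw [List.length_ofFn]
        exact lt_of_lt_of_le (hL0 x hx y hy) (le_max_right _ _)
      have := hbr ⟨dpt x y, hd⟩
      rw [List.get_ofFn] at this
      simp only [Fin.coe_cast] at this
      exact hdpt x hx y hy this


def Fam (A B : Set (ℕ → Bool)) : Set (Set ℕ) :=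
  (NS '' A ∪ NM '' B) ∪ NK '' Set.univ

lemma core_subset_iInter (A B : Set (ℕ → Bool)) (S : Finset (Set ℕ)) :
    ↑S ⊆ Fam A B →
    ∃ (FA FB : Set (ℕ → Bool)) (m₀ : ℕ), FA.Finite ∧ FB.Finite ∧ FA ⊆ A ∧ FB ⊆ B ∧
      Core FA FB m₀ ⊆ ⋂ s ∈ S, s := by
  classical
  induction S using Finset.induction_on with
  | empty =>
    intro _
    exact ⟨∅, ∅, 0, Set.finite_empty, Set.finite_empty, by simp, by simp, by simp⟩
  | @insert a S ha IH =>
    intro hS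
    have haF : a ∈ Fam A B := hS (by simp)
    obtain ⟨FA, FB, m₀, h1, h2, h3, h4, h5⟩ :=
      IH (fun s hs => hS (by simp only [Finset.coe_insert, Set.mem_insert_iff]; right; exact hs))
    rw [Finset.set_biInter_insert]
    rcases haF with (⟨x, hx, rfl⟩ | ⟨y, hy, rfl⟩) | ⟨m, -, rfl⟩
    · exact ⟨insert x FA, FB, m₀, h1.insert x, h2, Set.insert_subset hx h3, h4,
        Set.subset_inter (core_subset_NS (Set.mem_insert x FA))
          (le_trans (core_mono (Set.subset_insert x FA) le_rfl le_rfl) h5)⟩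
    · exact ⟨FA, insert y FB, m₀, h1, h2.insert y, h3, Set.insert_subset hy h4,
        Set.subset_inter (core_subset_NM (Set.mem_insert y FB))
          (le_trans (core_mono le_rfl (Set.subset_insert y FB) le_rfl) h5)⟩
    · exact ⟨FA, FB, max m₀ m, h1, h2, h3, h4,
        Set.subset_inter (core_subset_NK (le_max_right m₀ m))
          (le_trans (core_mono le_rfl le_rfl (le_max_left m₀ m)) h5)⟩

lemma fam_sfip {A B : Set (ℕ → Bool)} (hne : ∀ x ∈ A, ∀ y ∈ B, x ≠ y) :
    ∀ S : Finset (Set ℕ), ↑S ⊆ Fam A B → Set.Infinite (⋂ s ∈ S, (s : Set ℕ)) := by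
  intro S hS
  obtain ⟨FA, FB, m₀, h1, h2, h3, h4, h5⟩ := core_subset_iInter A B S hS
  exact (core_infinite h1 h2 (fun x hx y hy => hne x (h3 hx) y (h4 hy)) m₀).mono h5

lemma exists_pseudo_of_countable (F : Set (Set ℕ)) (hc : F.Countable)
    (hs : ∀ S : Finset (Set ℕ), ↑S ⊆ F → Set.Infinite (⋂ s ∈ S, (s : Set ℕ))) :
    ∃ P : Set ℕ, P.Infinite ∧ ∀ X ∈ F, (P \ X).Finite := by
  classical
  rcases F.eq_empty_or_nonempty with rfl | hFne
  · exact ⟨Set.univ, Set.infinite_univ, by simp⟩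
  obtain ⟨f, rfl⟩ := hc.exists_eq_range hFne
  set g : ℕ → Set ℕ := fun n => ⋂ i ∈ Finset.range (n + 1), f i with hgdef
  have hg : ∀ n, (g n).Infinite := by
    intro n
    have h1 := hs ((Finset.range (n + 1)).image f)
      (by
        intro s hs'
        simp only [Finset.coe_image, Set.mem_image, Finset.mem_coe] at hs'
        obtain ⟨i, -, rfl⟩ := hs'
        exact Set.mem_range_self i)
    refine h1.mono ?_
    intro a ha
    simp only [hgdef, Set.mem_iInter]
    intro i hi
    simp only [Set.mem_iInter] at ha
    exact ha (f i) (Finset.mem_image_of_mem f hi)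
  have hstep : ∀ (n k : ℕ), ∃ m ∈ g n, k < m := fun n k => (hg n).exists_gt k
  let a : ℕ → ℕ := fun n =>
    Nat.rec (Classical.choose (hstep 0 0))
      (fun n an => Classical.choose (hstep (n + 1) an)) n
  have ha0 : a 0 ∈ g 0 := (Classical.choose_spec (hstep 0 0)).1
  have haS : ∀ n, a (n + 1) ∈ g (n + 1) ∧ a n < a (n + 1) := fun n =>
    ⟨(Classical.choose_spec (hstep (n + 1) (a n))).1,
     (Classical.choose_spec (hstep (n + 1) (a n))).2⟩
  have hmem : ∀ n, a n ∈ g n := by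
    intro n; cases n with
    | zero => exact ha0
    | succ n => exact (haS n).1
  have hmono : StrictMono a := strictMono_nat_of_lt_succ fun n => (haS n).2
  refine ⟨Set.range a, Set.infinite_range_of_injective hmono.injective, ?_⟩
  rintro X ⟨i, rfl⟩
  have hsub : Set.range a \ f i ⊆ a '' Set.Iio i := by
    rintro p ⟨⟨n, rfl⟩, hp⟩
    by_contra hn
    have hin : i ≤ n := by
      by_contra h'
      exact hn ⟨n, Set.mem_Iio.mpr (by omega), rfl⟩
    refine hp ?_
    have := hmem n
    simp only [hgdef, Set.mem_iInter] at this
    exact this i (Finset.mem_range.mpr (by omega))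
  exact ((Set.finite_Iio i).image a).subset hsub

lemma mem_PFam_gt_aleph0 : ∀ κ ∈ PFam, Cardinal.aleph0 < κ := by
  rintro κ ⟨F, rfl, hsfip, hno⟩
  by_contra hle
  push_neg at hle
  have hc : F.Countable := by
    rw [← Set.countable_coe_iff]
    exact Cardinal.mk_le_aleph0_iff.mp hle
  exact hno (exists_pseudo_of_countable F hc hsfip)

lemma pNum_def : pNum = sInf PFam := rfl


lemma exists_sep {D A B : Set (ℕ → Bool)} (hD : Cardinal.mk D < pNum)
    (hA : A ⊆ D) (hB : B ⊆ D) (hne : ∀ x ∈ A, ∀ y ∈ B, x ≠ y) :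
    ∃ Bs : Set (ℕ → Bool), MeasurableSet Bs ∧ (∀ x ∈ A, x ∈ Bs) ∧ ∀ y ∈ B, y ∉ Bs := by
  classical
  have hPne : PFam.Nonempty := by
    by_contra h
    rw [Set.not_nonempty_iff_eq_empty] at h
    rw [pNum_def, h, Cardinal.sInf_empty] at hD
    exact (Cardinal.zero_le _ : (0 : Cardinal) ≤ _).not_gt hD
  have hal : Cardinal.aleph0 < pNum := by
    rw [pNum_def]
    exact mem_PFam_gt_aleph0 _ (csInf_mem hPne)
  have hcard : Cardinal.mk (Fam A B) < pNum := by
    have h1 : Cardinal.mk (Fam A B) ≤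
        (Cardinal.mk ↥(NS '' A) + Cardinal.mk ↥(NM '' B)) + Cardinal.mk ↥(NK '' Set.univ) :=
      le_trans (Cardinal.mk_union_le _ _) (add_le_add (Cardinal.mk_union_le _ _) le_rfl)
    have hns : Cardinal.mk ↥(NS '' A) < pNum :=
      lt_of_le_of_lt (le_trans Cardinal.mk_image_le (Cardinal.mk_le_mk_of_subset hA)) hD
    have hnm : Cardinal.mk ↥(NM '' B) < pNum :=
      lt_of_le_of_lt (le_trans Cardinal.mk_image_le (Cardinal.mk_le_mk_of_subset hB)) hD
    have hnk : Cardinal.mk ↥(NK '' Set.univ) < pNum := by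
      refine lt_of_le_of_lt ?_ hal
      rw [Set.image_univ]
      exact le_trans Cardinal.mk_range_le (le_of_eq Cardinal.mk_nat)
    exact lt_of_le_of_lt h1
      (Cardinal.add_lt_of_lt hal.le (Cardinal.add_lt_of_lt hal.le hns hnm) hnk)
  have hP : ∃ P : Set ℕ, P.Infinite ∧ ∀ X ∈ Fam A B, (P \ X).Finite := by
    by_contra h
    have hle : pNum ≤ Cardinal.mk (Fam A B) := by
      rw [pNum_def]
      exact csInf_le (OrderBot.bddBelow _) ⟨Fam A B, rfl, fam_sfip hne, h⟩
    exact lt_irrefl _ (lt_of_le_of_lt hle hcard)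
  obtain ⟨P, hPinf, hPfin⟩ := hP
  set H : Set (List Bool) := {s | ∃ n ∈ P, s ∈ (dec n).2} with hHdef
  refine ⟨{z | ∀ m : ℕ, ∃ s ∈ H, m ≤ s.length ∧ brMem z s}, ?_, ?_, ?_⟩
  · have heq : {z : ℕ → Bool | ∀ m : ℕ, ∃ s ∈ H, m ≤ s.length ∧ brMem z s}
        = ⋂ m : ℕ, ⋃ s : List Bool, ⋃ (_ : s ∈ H ∧ m ≤ s.length), {z | brMem z s} := by
      ext z
      simp only [Set.mem_setOf_eq, Set.mem_iInter, Set.mem_iUnion]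
      constructor
      · intro h m; obtain ⟨s, hsH, hsl, hbr⟩ := h m; exact ⟨s, ⟨hsH, hsl⟩, hbr⟩
      · intro h m; obtain ⟨s, ⟨hsH, hsl⟩, hbr⟩ := h m; exact ⟨s, hsH, hsl, hbr⟩
    rw [heq]
    refine MeasurableSet.iInter fun m => MeasurableSet.iUnion fun s =>
      MeasurableSet.iUnion fun _ => ?_
    have hcyl : {z : ℕ → Bool | brMem z s}
        = ⋂ i : Fin s.length, (fun z : ℕ → Bool => z i) ⁻¹' {s.get i} := by
      ext z
      simp only [Set.mem_setOf_eq, Set.mem_iInter, Set.mem_preimage, Set.mem_singleton_iff,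
        brMem]
      exact ⟨fun h i => (h i).symm, fun h i => (h i).symm⟩
    rw [hcyl]
    exact MeasurableSet.iInter fun i => (measurable_pi_apply (i : ℕ)) (measurableSet_singleton _)
  · intro x hx m
    have hbadfin : ((P \ NS x) ∪ (P \ NK m)).Finite :=
      (hPfin _ (Set.mem_union_left _ (Set.mem_union_left _ ⟨x, hx, rfl⟩))).union
        (hPfin _ (Set.mem_union_right _ ⟨m, Set.mem_univ m, rfl⟩))
    obtain ⟨n, hn1, hn2⟩ := (hPinf.diff hbadfin).nonempty
    have hnS : n ∈ NS x := by
      by_contra h; exact hn2 (Set.mem_union_left _ ⟨hn1, h⟩)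
    have hnK : n ∈ NK m := by
      by_contra h; exact hn2 (Set.mem_union_right _ ⟨hn1, h⟩)
    obtain ⟨hgood, s, hsmem, hbr⟩ := hnS
    exact ⟨s, ⟨n, hn1, hsmem⟩, le_trans hnK.2 (hgood s hsmem), hbr⟩
  · intro y hy hmem
    have hbad : (P \ NM y).Finite :=
      hPfin _ (Set.mem_union_left _ (Set.mem_union_right _ ⟨y, hy, rfl⟩))
    have hSbad : (⋃ n ∈ P \ NM y, ((dec n).2 : Set (List Bool))).Finite :=
      Set.Finite.biUnion hbad fun n _ => (dec n).2.finite_toSet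
    obtain ⟨L, hL⟩ := (hSbad.image List.length).bddAbove
    obtain ⟨s, hsH, hsl, hbr⟩ := hmem (L + 1)
    obtain ⟨n, hnP, hsn⟩ := hsH
    by_cases hn : n ∈ NM y
    · exact hn.2 s hsn hbr
    · have hsb : s ∈ ⋃ n ∈ P \ NM y, ((dec n).2 : Set (List Bool)) :=
        Set.mem_biUnion ⟨hnP, hn⟩ hsn
      have := hL (Set.mem_image_of_mem List.length hsb)
      omega

end Stmt18Aux

/-- Every partial function `2^ω → 2^ω` whose domain has size `< 𝔭` extends to a
total Borel function. -/
theorem stmt18 (D : Set (ℕ → Bool)) (hD : Cardinal.mk D < pNum)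
    (g : (ℕ → Bool) → ℕ → Bool) :
    ∃ f : (ℕ → Bool) → ℕ → Bool, Measurable f ∧ ∀ x ∈ D, f x = g x := by
  classical
  have key : ∀ n : ℕ, ∃ Bs : Set (ℕ → Bool), MeasurableSet Bs ∧
      (∀ x ∈ D, g x n = true → x ∈ Bs) ∧ (∀ x ∈ D, g x n ≠ true → x ∉ Bs) := by
    intro n
    have hne : ∀ x ∈ {x | x ∈ D ∧ g x n = true}, ∀ y ∈ {x | x ∈ D ∧ g x n ≠ true},
        x ≠ y := by
      rintro x ⟨hx1, hx2⟩ y ⟨hy1, hy2⟩ rfl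
      exact hy2 hx2
    obtain ⟨Bs, h1, h2, h3⟩ := Stmt18Aux.exists_sep (D := D) hD
      (fun x hx => hx.1) (fun x hx => hx.1) hne
    exact ⟨Bs, h1, fun x hx hg => h2 x ⟨hx, hg⟩, fun x hx hg => h3 x ⟨hx, hg⟩⟩
  choose Bs hmeas hin hout using key
  refine ⟨fun x n => if x ∈ Bs n then true else false, ?_, ?_⟩
  · rw [measurable_pi_iff]
    intro n
    exact Measurable.ite (hmeas n) measurable_const measurable_const
  · intro x hx
    funext n
    show (if x ∈ Bs n then true else false) = g x n
    by_cases hg : g x n = true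
    · rw [if_pos (hin n x hx hg), hg]
    · rw [if_neg (hout n x hx hg)]
      cases hgt : g x n
      · rfl
      · exact absurd hgt hg
end
end
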